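/- arXiv:1408.2260 — 3 statements merged into one kernel-verified Lean document; each statement's English description precedes it below -/
import Mathlib

section
/- Subdividing an edge of an NCL constraint graph preserves the equivalence structure of orientations: if graph H is obtained from G by replacing an edge e = {u,v} of weight k by a path u–x–v through a new connector vertex x with both new edges of weight k and c(x)=k, then valid orientations of G in which the two new edges of H are consistently oriented along the path correspond bijectively to a subset of valid orientations of H, and two valid orientations of G are equivalent if and only if their corresponding orientations of H are equivalent. -/
def nclHead {V E : Type} (ends : E → V × V) (o : E → Bool) (e : E) : V :=
  if o e then (ends e).2 else (ends e).1

def nclValid {V E : Type} [Fintype E] [DecidableEq V] (ends : E → V × V)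
    (w : E → ℕ) (c : V → ℕ) (o : E → Bool) : Prop :=
  ∀ v : V, c v ≤ ∑ e ∈ Finset.univ.filter (fun e => nclHead ends o e = v), w e

def nclDifferOne {E : Type} (o o' : E → Bool) : Prop :=
  ∃ e₀, o e₀ ≠ o' e₀ ∧ ∀ e, e ≠ e₀ → o e = o' e

def nclMove {V E : Type} [Fintype E] [DecidableEq V] (ends : E → V × V)
    (w : E → ℕ) (c : V → ℕ) (o o' : E → Bool) : Prop :=
  nclValid ends w c o ∧ nclValid ends w c o' ∧ nclDifferOne o o'

def nclEquiv {V E : Type} [Fintype E] [DecidableEq V] (ends : E → V × V)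
    (w : E → ℕ) (c : V → ℕ) (o o' : E → Bool) : Prop :=
  Relation.ReflTransGen (nclMove ends w c) o o'

section Subdivision

variable {V E : Type} [Fintype E] [DecidableEq E] [DecidableEq V]

/-- Edges of the graph `H` obtained from `G` by subdividing the edge `e₀`
through a new connector vertex: the old edges other than `e₀`, plus the two
new edges `u–x` (`Sum.inr false`) and `x–v` (`Sum.inr true`). -/
def subEnds (ends : E → V × V) (e₀ : E) :
    ({e : E // e ≠ e₀} ⊕ Bool) → (V ⊕ Unit) × (V ⊕ Unit)
  | Sum.inl e => (Sum.inl (ends e.1).1, Sum.inl (ends e.1).2)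
  | Sum.inr false => (Sum.inl (ends e₀).1, Sum.inr ())
  | Sum.inr true => (Sum.inr (), Sum.inl (ends e₀).2)

/-- Weights in `H`: the two new edges inherit the weight of `e₀`. -/
def subW (w : E → ℕ) (e₀ : E) : ({e : E // e ≠ e₀} ⊕ Bool) → ℕ
  | Sum.inl e => w e.1
  | Sum.inr _ => w e₀

/-- Constraints in `H`: the new connector vertex `x` has constraint `w e₀`. -/
def subC (w : E → ℕ) (c : V → ℕ) (e₀ : E) : (V ⊕ Unit) → ℕ :=
  Sum.elim c (fun _ => w e₀)

/-- The correspondence: an orientation `o` of `G` maps to the orientation of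
`H` agreeing with `o` off `e₀` and orienting both new edges in the direction
of `o e₀` (consistently along the path `u–x–v`). -/
def subPhi (e₀ : E) (o : E → Bool) : ({e : E // e ≠ e₀} ⊕ Bool) → Bool :=
  Sum.elim (fun e => o e.1) (fun _ => o e₀)

/-- An orientation of `H` is consistent on the subdivided path if the two
new edges are oriented the same way along the path. -/
def subConsistent (e₀ : E) (oH : ({e : E // e ≠ e₀} ⊕ Bool) → Bool) : Prop :=
  oH (Sum.inr false) = oH (Sum.inr true)

/-- A general orientation of `H`, built from a `G`-orientation on the old
edges and two booleans for the two new edges. -/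
def subExt (e₀ : E) (oG : E → Bool) (bf bt : Bool) :
    ({e : E // e ≠ e₀} ⊕ Bool) → Bool :=
  Sum.elim (fun e => oG e.1) (fun b => bif b then bt else bf)

/-- Retraction back to `G`-orientations. -/
def subPsi (e₀ : E) (oH : ({e : E // e ≠ e₀} ⊕ Bool) → Bool) : E → Bool :=
  fun e => if h : e = e₀ then oH (Sum.inr true) else oH (Sum.inl ⟨e, h⟩)

lemma subPsi_phi (e₀ : E) (o : E → Bool) : subPsi e₀ (subPhi e₀ o) = o := by
  funext e
  unfold subPsi subPhi
  split <;> simp_all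

lemma subExt_psi (e₀ : E) (oH : ({e : E // e ≠ e₀} ⊕ Bool) → Bool) :
    subExt e₀ (subPsi e₀ oH) (oH (Sum.inr false)) (oH (Sum.inr true)) = oH := by
  funext e
  cases e with
  | inl e => simp [subExt, subPsi, e.2]
  | inr b => cases b <;> simp [subExt]

lemma subPhi_ext (e₀ : E) (o : E → Bool) :
    subPhi e₀ o = subExt e₀ o (o e₀) (o e₀) := by
  funext e
  cases e with
  | inl e => rfl
  | inr b => cases b <;> rfl

lemma head_inl (ends : E → V × V) (e₀ : E) (oG : E → Bool) (bf bt : Bool)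
    (a : {e : E // e ≠ e₀}) :
    nclHead (subEnds ends e₀) (subExt e₀ oG bf bt) (Sum.inl a)
      = Sum.inl (nclHead ends oG a.1) := by
  unfold nclHead subEnds subExt
  by_cases h : oG a.1 <;> simp [h]

lemma sum_inl (ends : E → V × V) (w : E → ℕ) (e₀ : E) (oG : E → Bool)
    (bf bt : Bool) (z : V) :
    ∑ e ∈ Finset.univ.filter
        (fun e => nclHead (subEnds ends e₀) (subExt e₀ oG bf bt) e = Sum.inl z),
      subW w e₀ e
    = (∑ e ∈ (Finset.univ.erase e₀).filter (fun e => nclHead ends oG e = z), w e)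
      + ((if bf = false ∧ (ends e₀).1 = z then w e₀ else 0)
      + (if bt = true ∧ (ends e₀).2 = z then w e₀ else 0)) := by
  rw [Finset.sum_filter, Fintype.sum_sum_type]
  congr 1
  · rw [Finset.sum_filter,
      Finset.sum_subtype (p := fun e => e ≠ e₀) (Finset.univ.erase e₀)
        (by simp) (fun e => if nclHead ends oG e = z then w e else 0)]
    refine Finset.sum_congr rfl fun a _ => ?_
    rw [head_inl]
    simp [subW]
  · rw [Fintype.sum_bool]
    unfold nclHead subEnds subExt subW
    cases bf <;> cases bt <;> simp <;> split_ifs <;> simp_all <;> omega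

lemma sum_inr (ends : E → V × V) (w : E → ℕ) (e₀ : E) (oG : E → Bool)
    (bf bt : Bool) :
    ∑ e ∈ Finset.univ.filter
        (fun e => nclHead (subEnds ends e₀) (subExt e₀ oG bf bt) e = Sum.inr ()),
      subW w e₀ e
    = (if bf = true then w e₀ else 0) + (if bt = false then w e₀ else 0) := by
  rw [Finset.sum_filter, Fintype.sum_sum_type]
  have h1 : (∑ a : {e : E // e ≠ e₀},
      if nclHead (subEnds ends e₀) (subExt e₀ oG bf bt) (Sum.inl a) = Sum.inr ()
        then subW w e₀ (Sum.inl a) else 0) = 0 := by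
    refine Finset.sum_eq_zero fun a _ => ?_
    rw [head_inl]
    simp
  rw [h1, Fintype.sum_bool, zero_add]
  unfold nclHead subEnds subExt subW
  cases bf <;> cases bt <;> simp [add_comm]

lemma sum_G (ends : E → V × V) (w : E → ℕ) (e₀ : E) (oG : E → Bool) (z : V) :
    ∑ e ∈ Finset.univ.filter (fun e => nclHead ends oG e = z), w e
    = (∑ e ∈ (Finset.univ.erase e₀).filter (fun e => nclHead ends oG e = z), w e)
      + (if nclHead ends oG e₀ = z then w e₀ else 0) := by
  rw [Finset.sum_filter, Finset.sum_filter,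
    ← Finset.sum_erase_add _ _ (Finset.mem_univ e₀)]

lemma S_congr (ends : E → V × V) (w : E → ℕ) (e₀ : E) (o o' : E → Bool)
    (h : ∀ e, e ≠ e₀ → o e = o' e) (z : V) :
    (∑ e ∈ (Finset.univ.erase e₀).filter (fun e => nclHead ends o e = z), w e)
    = ∑ e ∈ (Finset.univ.erase e₀).filter (fun e => nclHead ends o' e = z), w e := by
  refine Finset.sum_congr ?_ fun _ _ => rfl
  refine Finset.filter_congr fun e he => ?_
  rw [Finset.mem_erase] at he
  rw [nclHead, nclHead, h e he.1]

lemma validPhi (ends : E → V × V) (w : E → ℕ) (c : V → ℕ) (e₀ : E)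
    (o : E → Bool) (h : nclValid ends w c o) :
    nclValid (subEnds ends e₀) (subW w e₀) (subC w c e₀) (subPhi e₀ o) := by
  rw [subPhi_ext]
  intro v
  cases v with
  | inl z =>
    rw [sum_inl]
    have hz := h z
    rw [sum_G ends w e₀ o z] at hz
    simp only [subC, Sum.elim_inl]
    rw [nclHead] at hz
    cases hb : o e₀ <;> rw [hb] at hz <;> simp [hb] <;>
      split_ifs at hz ⊢ <;> simp_all <;> omega
  | inr u =>
    rw [sum_inr]
    simp only [subC, Sum.elim_inr]
    cases hb : o e₀ <;> simp

set_option maxRecDepth 10000 in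
lemma validPsi (ends : E → V × V) (w : E → ℕ) (c : V → ℕ) (e₀ : E)
    (oH : ({e : E // e ≠ e₀} ⊕ Bool) → Bool)
    (hH : nclValid (subEnds ends e₀) (subW w e₀) (subC w c e₀) oH) :
    nclValid ends w c (subPsi e₀ oH) := by
  have hext : oH = subExt e₀ (subPsi e₀ oH) (oH (Sum.inr false)) (oH (Sum.inr true)) :=
    (subExt_psi e₀ oH).symm
  intro z
  have hz := hH (Sum.inl z)
  have hx := hH (Sum.inr ())
  rw [hext, sum_inl] at hz
  rw [hext, sum_inr] at hx
  simp only [subC, Sum.elim_inl, Sum.elim_inr] at hz hx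
  rw [sum_G ends w e₀ _ z, nclHead]
  have hge : subPsi e₀ oH e₀ = oH (Sum.inr true) := by simp [subPsi]
  rw [hge]
  clear hext hH
  cases hbf : oH (Sum.inr false) <;> cases hbt : oH (Sum.inr true) <;>
    rw [hbf, hbt] at hz hx <;>
    simp only [Bool.false_eq_true, Bool.true_eq_false, false_and, true_and,
      if_false, if_true, add_zero, zero_add, if_pos rfl, Bool.not_true,
      Bool.not_false] at hz hx ⊢ <;>
    split_ifs at hz hx ⊢ <;> omega

lemma subExt_congr (e₀ : E) (o o' : E → Bool) (bf bt : Bool)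
    (h : ∀ e, e ≠ e₀ → o e = o' e) :
    subExt e₀ o bf bt = subExt e₀ o' bf bt := by
  funext x
  cases x with
  | inl a => exact h a.1 a.2
  | inr b => rfl

lemma diff_inr_true (e₀ : E) (o : E → Bool) (bf bt bt' : Bool) (h : bt ≠ bt') :
    nclDifferOne (subExt e₀ o bf bt) (subExt e₀ o bf bt') := by
  refine ⟨Sum.inr true, h, fun x hx => ?_⟩
  cases x with
  | inl a => rfl
  | inr b => cases b with
    | false => rfl
    | true => exact absurd rfl hx

lemma diff_inr_false (e₀ : E) (o : E → Bool) (bf bf' bt : Bool) (h : bf ≠ bf') :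
    nclDifferOne (subExt e₀ o bf bt) (subExt e₀ o bf' bt) := by
  refine ⟨Sum.inr false, h, fun x hx => ?_⟩
  cases x with
  | inl a => rfl
  | inr b => cases b with
    | false => exact absurd rfl hx
    | true => rfl

lemma head_e₀_ne (ends : E → V × V) (e₀ : E) (hloop : (ends e₀).1 ≠ (ends e₀).2)
    (o o' : E → Bool) (hd : o e₀ ≠ o' e₀) :
    nclHead ends o e₀ ≠ nclHead ends o' e₀ := by
  unfold nclHead
  cases hb : o e₀ <;> cases hb' : o' e₀ <;> simp_all <;>
    exact fun hh => hloop hh.symm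

set_option maxRecDepth 10000 in
lemma validMid (ends : E → V × V) (w : E → ℕ) (c : V → ℕ) (e₀ : E)
    (hloop : (ends e₀).1 ≠ (ends e₀).2) (o o' : E → Bool)
    (hv : nclValid ends w c o) (hv' : nclValid ends w c o')
    (hd : o e₀ ≠ o' e₀) (hag : ∀ e, e ≠ e₀ → o e = o' e) :
    nclValid (subEnds ends e₀) (subW w e₀) (subC w c e₀) (subExt e₀ o true false) := by
  intro v
  cases v with
  | inl z =>
    rw [sum_inl]
    simp only [subC, Sum.elim_inl]
    have hone : ((if true = false ∧ (ends e₀).1 = z then w e₀ else 0)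
        + (if false = true ∧ (ends e₀).2 = z then w e₀ else 0)) = 0 := by simp
    rw [hone, add_zero]
    by_cases hh : nclHead ends o e₀ = z
    · have h2 := hv' z
      rw [sum_G ends w e₀ o' z] at h2
      rw [S_congr ends w e₀ o o' hag z]
      have hne2 : nclHead ends o' e₀ ≠ z := by
        intro hzz
        exact head_e₀_ne ends e₀ hloop o o' hd (hh.trans hzz.symm)
      rw [if_neg hne2, add_zero] at h2
      exact h2
    · have h1 := hv z
      rw [sum_G ends w e₀ o z, if_neg hh, add_zero] at h1
      exact h1
  | inr u =>
    rw [sum_inr]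
    simp [subC]

lemma moveForward (ends : E → V × V) (w : E → ℕ) (c : V → ℕ) (e₀ : E)
    (hloop : (ends e₀).1 ≠ (ends e₀).2) (o o' : E → Bool)
    (h : nclMove ends w c o o') :
    nclEquiv (subEnds ends e₀) (subW w e₀) (subC w c e₀)
      (subPhi e₀ o) (subPhi e₀ o') := by
  obtain ⟨hv, hv', e, hne, hag⟩ := h
  by_cases he : e = e₀
  · subst he
    have hvm := validMid ends w c e hloop o o' hv hv' hne hag
    have hphi' : subPhi e o' = subExt e o (o' e) (o' e) := by
      rw [subPhi_ext]
      exact (subExt_congr e o o' _ _ hag).symm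
    have h1 : nclMove (subEnds ends e) (subW w e) (subC w c e)
        (subPhi e o) (subExt e o true false) := by
      refine ⟨validPhi ends w c e o hv, hvm, ?_⟩
      rw [subPhi_ext]
      cases hb : o e with
      | true => exact diff_inr_true e o true true false (by simp)
      | false =>
        have : subExt e o false false = subExt e o false false := rfl
        exact diff_inr_false e o false true false (by simp)
    have h2 : nclMove (subEnds ends e) (subW w e) (subC w c e)
        (subExt e o true false) (subPhi e o') := by
      refine ⟨hvm, validPhi ends w c e o' hv', ?_⟩
      rw [hphi']
      cases hb : o e with
      | true =>
        have hb' : o' e = false := by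
          cases hb2 : o' e
          · rfl
          · exact absurd (hb.trans hb2.symm) hne
        rw [hb']
        exact diff_inr_false e o true false false (by simp)
      | false =>
        have hb' : o' e = true := by
          cases hb2 : o' e
          · exact absurd (hb.trans hb2.symm) hne
          · rfl
        rw [hb']
        exact diff_inr_true e o true false true (by simp)
    exact (Relation.ReflTransGen.single h1).tail h2
  · refine Relation.ReflTransGen.single
      ⟨validPhi ends w c e₀ o hv, validPhi ends w c e₀ o' hv', Sum.inl ⟨e, he⟩, hne, ?_⟩
    intro x hx
    cases x with
    | inl a =>
      refine hag a.1 fun hh => hx ?_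
      obtain ⟨av, ha⟩ := a
      subst hh
      rfl
    | inr b => exact hag e₀ fun hh => he hh.symm

lemma moveBackward (ends : E → V × V) (w : E → ℕ) (c : V → ℕ) (e₀ : E)
    (oH oH' : ({e : E // e ≠ e₀} ⊕ Bool) → Bool)
    (h : nclMove (subEnds ends e₀) (subW w e₀) (subC w c e₀) oH oH') :
    nclEquiv ends w c (subPsi e₀ oH) (subPsi e₀ oH') := by
  obtain ⟨hv, hv', e, hne, hag⟩ := h
  cases e with
  | inl a =>
    refine Relation.ReflTransGen.single
      ⟨validPsi ends w c e₀ oH hv, validPsi ends w c e₀ oH' hv', a.1, ?_, ?_⟩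
    · show subPsi e₀ oH a.1 ≠ subPsi e₀ oH' a.1
      unfold subPsi
      rw [dif_neg a.2, dif_neg a.2]
      simpa using hne
    · intro e' he'
      unfold subPsi
      split
      · exact hag (Sum.inr true) (by simp)
      · next h' =>
        refine hag (Sum.inl ⟨e', h'⟩) fun hh => he' ?_
        rw [Sum.inl.injEq] at hh
        exact congrArg Subtype.val hh
  | inr b =>
    cases b with
    | false =>
      have : subPsi e₀ oH = subPsi e₀ oH' := by
        funext e'
        unfold subPsi
        split
        · exact hag (Sum.inr true) (by simp)
        · next h' => exact hag (Sum.inl ⟨e', h'⟩) (by simp)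
      rw [this]
      exact Relation.ReflTransGen.refl
    | true =>
      refine Relation.ReflTransGen.single
        ⟨validPsi ends w c e₀ oH hv, validPsi ends w c e₀ oH' hv', e₀, ?_, ?_⟩
      · show subPsi e₀ oH e₀ ≠ subPsi e₀ oH' e₀
        unfold subPsi
        rw [dif_pos rfl, dif_pos rfl]
        exact hne
      · intro e' he'
        unfold subPsi
        rw [dif_neg he', dif_neg he']
        exact hag (Sum.inl ⟨e', he'⟩) (by simp)

lemma equivForward (ends : E → V × V) (w : E → ℕ) (c : V → ℕ) (e₀ : E)
    (hloop : (ends e₀).1 ≠ (ends e₀).2) (o o' : E → Bool)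
    (h : nclEquiv ends w c o o') :
    nclEquiv (subEnds ends e₀) (subW w e₀) (subC w c e₀)
      (subPhi e₀ o) (subPhi e₀ o') := by
  induction h with
  | refl => exact Relation.ReflTransGen.refl
  | tail _ hm ih => exact ih.trans (moveForward ends w c e₀ hloop _ _ hm)

lemma equivBackward (ends : E → V × V) (w : E → ℕ) (c : V → ℕ) (e₀ : E)
    (oH oH' : ({e : E // e ≠ e₀} ⊕ Bool) → Bool)
    (h : nclEquiv (subEnds ends e₀) (subW w e₀) (subC w c e₀) oH oH') :
    nclEquiv ends w c (subPsi e₀ oH) (subPsi e₀ oH') := by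
  induction h with
  | refl => exact Relation.ReflTransGen.refl
  | tail _ hm ih => exact ih.trans (moveBackward ends w c e₀ _ _ hm)

/-- Subdividing an edge of an NCL constraint graph preserves the equivalence
structure of orientations: valid orientations of `G` correspond bijectively
(via the injection `subPhi`) to consistent valid orientations of `H`, and two
valid orientations of `G` are equivalent iff their images in `H` are. -/
theorem ncl_subdivision_preserves_equivalence
    (ends : E → V × V) (w : E → ℕ) (c : V → ℕ) (e₀ : E)
    (hloop : (ends e₀).1 ≠ (ends e₀).2) :
    Function.Injective (subPhi e₀) ∧
    (∀ o : E → Bool, nclValid ends w c o →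
      nclValid (subEnds ends e₀) (subW w e₀) (subC w c e₀) (subPhi e₀ o) ∧
        subConsistent e₀ (subPhi e₀ o)) ∧
    (∀ o o' : E → Bool, nclValid ends w c o → nclValid ends w c o' →
      (nclEquiv ends w c o o' ↔
        nclEquiv (subEnds ends e₀) (subW w e₀) (subC w c e₀)
          (subPhi e₀ o) (subPhi e₀ o'))) := by
  refine ⟨?_, fun o ho => ⟨validPhi ends w c e₀ o ho, rfl⟩, fun o o' ho ho' => ⟨?_, ?_⟩⟩
  · intro o o' h
    rw [← subPsi_phi e₀ o, ← subPsi_phi e₀ o', h]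
  · exact equivForward ends w c e₀ hloop o o'
  · intro h
    have key := equivBackward ends w c e₀ _ _ h
    rwa [subPsi_phi, subPsi_phi] at key

end Subdivision
end

section
/- Consider a bijection between orientations of a constraint graph G and orientations of its subdivision H (where each edge of G is replaced by a path of connector vertices, all sub-edges carrying the original weight and connectors' constraints equal to that weight, and H-orientations are restricted to those consistent along each path). Under this bijection, the answer to the full-to-full reachability question (o_S ≡ o_T?) is the same in G and in H. -/
section PathSubdivision

variable {V E : Type} [Fintype E] [DecidableEq E] [DecidableEq V]

/-- In the subdivision `H` of `G` where each edge `e` is replaced by a path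
through `n e` fresh connector vertices, the `j`-th node along the path of
`e` (positions `0` and `n e + 1` are the original endpoints of `e`, the
intermediate positions are the fresh connectors). -/
def pathNode (ends : E → V × V) (n : E → ℕ) (e : E) (j : Fin (n e + 2)) :
    V ⊕ (Σ e : E, Fin (n e)) :=
  if h0 : (j : ℕ) = 0 then Sum.inl (ends e).1
  else if h1 : (j : ℕ) = n e + 1 then Sum.inl (ends e).2
  else Sum.inr ⟨e, ⟨(j : ℕ) - 1, by have := j.isLt; omega⟩⟩

/-- The endpoints of the `i`-th sub-edge of the path replacing `e`. -/
def pathEnds (ends : E → V × V) (n : E → ℕ) :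
    (Σ e : E, Fin (n e + 1)) →
      (V ⊕ (Σ e : E, Fin (n e))) × (V ⊕ (Σ e : E, Fin (n e))) :=
  fun f => (pathNode ends n f.1 f.2.castSucc, pathNode ends n f.1 f.2.succ)

/-- Each sub-edge carries the weight of the original edge. -/
def pathW (w : E → ℕ) (n : E → ℕ) : (Σ e : E, Fin (n e + 1)) → ℕ :=
  fun f => w f.1

/-- Each fresh connector vertex has constraint equal to the weight of its
edge; original vertices keep their constraints. -/
def pathC (w : E → ℕ) (c : V → ℕ) (n : E → ℕ) :
    (V ⊕ (Σ e : E, Fin (n e))) → ℕ :=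
  Sum.elim c (fun s => w s.1)

/-- The bijection onto consistent orientations of `H`: an orientation `o` of
`G` orients every sub-edge of the path of `e` in the direction `o e`. -/
def pathPhi (n : E → ℕ) (o : E → Bool) : (Σ e : E, Fin (n e + 1)) → Bool :=
  fun f => o f.1

end PathSubdivision

/-! Reversing an edge `e` of `G` is simulated in `H` by reversing the sub-edges of its path one
at a time. In between, all sub-edges of the path point towards a single connector, so every
connector stays satisfied; the endpoints of `e` then receive nothing from the path, and each of
them is still satisfied because, `e` not being a loop, it also receives nothing from `e` in one of
the two valid orientations of `G` on either side of the move.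

Conversely, reading off the last sub-edge of every path sends valid orientations of `H` to valid
orientations of `G`, and moves to moves or to the identity. On a path of positive weight, validity
at the connectors means that no connector has both of its sub-edges pointing away from it, so if
the last sub-edge points forward, all of them do and the tail of the edge receives nothing from
the path. -/

section ConstraintGraph

variable {V E : Type} {ends : E → V × V} {w : E → ℕ} {c : V → ℕ} {o o' : E → Bool} {v : V}
  {e : E}

theorem nclHead_ne_of_ne (hloop : (ends e).1 ≠ (ends e).2) (h : o e ≠ o' e) :
    nclHead ends o e ≠ nclHead ends o' e := by
  cases ho : o e <;> cases ho' : o' e <;> simp_all [nclHead, Ne.symm]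

theorem nclDifferOne.comp_injective {α β : Type} {o o' : β → Bool} (h : nclDifferOne o o')
    {g : α → β} (hg : Function.Injective g) :
    o ∘ g = o' ∘ g ∨ nclDifferOne (o ∘ g) (o' ∘ g) := by
  refine or_iff_not_imp_left.mpr fun hne => ?_
  obtain ⟨a, ha⟩ := Function.ne_iff.mp hne
  obtain ⟨e₀, -, hagree⟩ := h
  have hga : g a = e₀ := by_contra fun hga => ha (hagree _ hga)
  exact ⟨a, ha, fun a' ha' => hagree _ fun h => ha' (hg (h.trans hga.symm))⟩

variable [Fintype E] [DecidableEq V]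

variable (ends w) in
def nclInflow (o : E → Bool) (v : V) : ℕ :=
  ∑ e ∈ Finset.univ.filter (fun e => nclHead ends o e = v), w e

theorem nclValid_iff : nclValid ends w c o ↔ ∀ v, c v ≤ nclInflow ends w o v :=
  Iff.rfl

theorem le_nclInflow_of_nclHead_eq (h : nclHead ends o e = v) : w e ≤ nclInflow ends w o v :=
  Finset.single_le_sum (fun _ _ => Nat.zero_le _) (Finset.mem_filter.mpr ⟨Finset.mem_univ _, h⟩)

theorem nclInflow_eq_zero (h : ∀ e, nclHead ends o e ≠ v) : nclInflow ends w o v = 0 :=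
  Finset.sum_eq_zero fun e he => absurd (Finset.mem_filter.mp he).2 (h e)

theorem nclMove.symm (h : nclMove ends w c o o') : nclMove ends w c o' o :=
  let ⟨ho, ho', e₀, hne, hagree⟩ := h
  ⟨ho', ho, e₀, hne.symm, fun e he => (hagree e he).symm⟩

end ConstraintGraph

section Subdivision

variable {V E : Type} {ends : E → V × V} {n : E → ℕ} {O : (Σ e : E, Fin (n e + 1)) → Bool}
  {e : E}

@[simp]
theorem pathNode_zero : pathNode ends n e 0 = Sum.inl (ends e).1 := by
  simp [pathNode]

@[simp]
theorem pathNode_last : pathNode ends n e (Fin.last _) = Sum.inl (ends e).2 := by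
  simp [pathNode]

@[simp]
theorem pathNode_succ_castSucc (i : Fin (n e)) :
    pathNode ends n e i.castSucc.succ = Sum.inr ⟨e, i⟩ := by
  have := i.isLt
  simp only [pathNode, Fin.val_succ, Fin.val_castSucc]
  rw [dif_neg (by omega), dif_neg (by omega)]
  rfl

theorem pathHead_of_false {k : Fin (n e + 1)} (h : O ⟨e, k⟩ = false) :
    nclHead (pathEnds ends n) O ⟨e, k⟩ = pathNode ends n e k.castSucc := by
  simp [nclHead, pathEnds, h]

theorem pathHead_of_true {k : Fin (n e + 1)} (h : O ⟨e, k⟩ = true) :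
    nclHead (pathEnds ends n) O ⟨e, k⟩ = pathNode ends n e k.succ := by
  simp [nclHead, pathEnds, h]

theorem pathHead_eq_inl {k : Fin (n e + 1)} {v : V}
    (h : nclHead (pathEnds ends n) O ⟨e, k⟩ = Sum.inl v) :
    (k = 0 ∧ O ⟨e, k⟩ = false ∧ (ends e).1 = v) ∨
      (k = Fin.last _ ∧ O ⟨e, k⟩ = true ∧ (ends e).2 = v) := by
  cases hO : O ⟨e, k⟩
  · rw [pathHead_of_false hO] at h
    cases k using Fin.cases with
    | zero => simp_all
    | succ i => simp at h
  · rw [pathHead_of_true hO] at h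
    cases k using Fin.lastCases with
    | last => simp_all
    | cast i => simp at h

theorem pathHead_eq_inr {f : Σ e : E, Fin (n e + 1)} {j : Fin (n e)}
    (h : nclHead (pathEnds ends n) O f = Sum.inr ⟨e, j⟩) :
    (f = ⟨e, j.castSucc⟩ ∧ O f = true) ∨ (f = ⟨e, j.succ⟩ ∧ O f = false) := by
  obtain ⟨e', k⟩ := f
  cases hO : O ⟨e', k⟩
  · rw [pathHead_of_false hO] at h
    cases k using Fin.cases with
    | zero => simp at h
    | succ i =>
      simp only [← Fin.succ_castSucc, pathNode_succ_castSucc, Sum.inr.injEq,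
        Sigma.mk.inj_iff] at h
      obtain ⟨rfl, h⟩ := h
      simp_all
  · rw [pathHead_of_true hO] at h
    cases k using Fin.lastCases with
    | last => simp at h
    | cast i =>
      simp only [pathNode_succ_castSucc, Sum.inr.injEq, Sigma.mk.inj_iff] at h
      obtain ⟨rfl, h⟩ := h
      simp_all

variable (n) in
def headSubEdge (o : E → Bool) (e : E) : Σ e : E, Fin (n e + 1) :=
  ⟨e, if o e then Fin.last _ else 0⟩

variable (n) in
theorem headSubEdge_injective (o : E → Bool) : Function.Injective (headSubEdge n o) :=
  fun _ _ h => congrArg Sigma.fst h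

theorem pathHead_headSubEdge {o : E → Bool} (h : O (headSubEdge n o e) = o e) :
    nclHead (pathEnds ends n) O (headSubEdge n o e) = Sum.inl (nclHead ends o e) := by
  unfold headSubEdge at h ⊢
  cases ho : o e <;> simp only [ho, if_true, if_false, Bool.false_eq_true] at h ⊢
  · rw [pathHead_of_false h, Fin.castSucc_zero, pathNode_zero, nclHead, ho,
      if_neg Bool.false_ne_true]
  · rw [pathHead_of_true h, Fin.succ_last, pathNode_last, nclHead, ho, if_pos rfl]

variable (n) in
def pathPsi (O : (Σ e : E, Fin (n e + 1)) → Bool) : E → Bool :=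
  fun e => O ⟨e, Fin.last _⟩

variable [DecidableEq E]

variable (n) in
def pathSweep (o : E → Bool) (e₀ : E) (k : ℕ) : (Σ e : E, Fin (n e + 1)) → Bool :=
  fun f => if f.1 = e₀ then decide ((f.2 : ℕ) < k) else o f.1

theorem pathSweep_eq_pathPhi {o o' : E → Bool} {e₀ : E} (hagree : ∀ e, e ≠ e₀ → o e = o' e) :
    pathSweep n o e₀ (if o' e₀ then n e₀ + 1 else 0) = pathPhi n o' := by
  funext ⟨e, k⟩
  by_cases he : e = e₀
  · subst he
    cases h : o' e <;> simp [pathSweep, pathPhi, h, k.isLt]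
  · simp [pathSweep, pathPhi, he, hagree e he]

theorem nclDifferOne_pathSweep_succ {o : E → Bool} {e₀ : E} {k : ℕ} (hk : k < n e₀ + 1) :
    nclDifferOne (pathSweep n o e₀ k) (pathSweep n o e₀ (k + 1)) := by
  refine ⟨⟨e₀, ⟨k, hk⟩⟩, by simp [pathSweep], ?_⟩
  rintro ⟨e, j⟩ hne
  by_cases he : e = e₀
  · subst he
    have hj : (j : ℕ) ≠ k := fun h => hne (by subst h; rfl)
    simp only [pathSweep, if_true, decide_eq_decide]
    omega
  · simp [pathSweep, he]

variable [Fintype E] [DecidableEq V] {w : E → ℕ} {c : V → ℕ}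

theorem le_pathInflow_connector {j : Fin (n e)}
    (h : O ⟨e, j.castSucc⟩ = true ∨ O ⟨e, j.succ⟩ = false) :
    w e ≤ nclInflow (pathEnds ends n) (pathW w n) O (Sum.inr ⟨e, j⟩) := by
  rcases h with h | h
  · exact le_nclInflow_of_nclHead_eq (w := pathW w n)
      (by rw [pathHead_of_true (ends := ends) h, pathNode_succ_castSucc])
  · exact le_nclInflow_of_nclHead_eq (w := pathW w n)
      (by rw [pathHead_of_false (ends := ends) h, ← Fin.succ_castSucc, pathNode_succ_castSucc])

theorem pathInflow_connector_eq_zero {j : Fin (n e)} (h₁ : O ⟨e, j.castSucc⟩ = false)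
    (h₂ : O ⟨e, j.succ⟩ = true) :
    nclInflow (pathEnds ends n) (pathW w n) O (Sum.inr ⟨e, j⟩) = 0 :=
  nclInflow_eq_zero fun f hf => by
    rcases pathHead_eq_inr hf with ⟨rfl, h⟩ | ⟨rfl, h⟩ <;> simp_all

theorem eq_true_of_nclValid_of_last_eq_true
    (hO : nclValid (pathEnds ends n) (pathW w n) (pathC w c n) O) (hw : w e ≠ 0)
    (h : O ⟨e, Fin.last _⟩ = true) (k : Fin (n e + 1)) : O ⟨e, k⟩ = true := by
  induction k using Fin.reverseInduction with
  | last => exact h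
  | cast j hj =>
    by_contra hc
    have hvalid := nclValid_iff.mp hO (Sum.inr ⟨e, j⟩)
    rw [pathInflow_connector_eq_zero (by simpa using hc) hj] at hvalid
    exact hw (Nat.le_zero.mp hvalid)

theorem nclInflow_le_pathInflow {o : E → Bool} {v : V}
    (h : ∀ e, nclHead ends o e = v → O (headSubEdge n o e) = o e) :
    nclInflow ends w o v ≤ nclInflow (pathEnds ends n) (pathW w n) O (Sum.inl v) := by
  let emb : E ↪ Σ e : E, Fin (n e + 1) := ⟨headSubEdge n o, headSubEdge_injective n o⟩
  calc nclInflow ends w o v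
      = ∑ f ∈ (Finset.univ.filter fun e => nclHead ends o e = v).map emb, pathW w n f :=
        (Finset.sum_map _ emb (pathW w n)).symm
    _ ≤ _ := Finset.sum_le_sum_of_subset fun f hf => ?_
  obtain ⟨e, he, rfl⟩ := Finset.mem_map.mp hf
  have he : nclHead ends o e = v := (Finset.mem_filter.mp he).2
  exact Finset.mem_filter.mpr
    ⟨Finset.mem_univ _, (pathHead_headSubEdge (h e he)).trans (congrArg Sum.inl he)⟩

theorem pathInflow_le_nclInflow_pathPsi
    (hO : nclValid (pathEnds ends n) (pathW w n) (pathC w c n) O) (v : V) :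
    nclInflow (pathEnds ends n) (pathW w n) O (Sum.inl v) ≤
      nclInflow ends w (pathPsi n O) v := by
  let emb : E ↪ Σ e : E, Fin (n e + 1) :=
    ⟨headSubEdge n (pathPsi n O), headSubEdge_injective n _⟩
  calc nclInflow (pathEnds ends n) (pathW w n) O (Sum.inl v)
      ≤ ∑ f ∈ (Finset.univ.filter fun e => nclHead ends (pathPsi n O) e = v).map emb,
          pathW w n f := Finset.sum_le_sum_of_ne_zero fun f hf hw => ?_
    _ = nclInflow ends w (pathPsi n O) v := Finset.sum_map _ emb (pathW w n)
  obtain ⟨e, k⟩ := f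
  simp only [Finset.mem_map, Finset.mem_filter, Finset.mem_univ, true_and]
  rcases pathHead_eq_inl (Finset.mem_filter.mp hf).2 with ⟨rfl, hk, hv⟩ | ⟨rfl, hk, hv⟩
  · have hψ : pathPsi n O e = false := by
      by_contra hψ
      simpa [hk] using
        eq_true_of_nclValid_of_last_eq_true hO hw (by simpa [pathPsi] using hψ) 0
    exact ⟨e, by simp [nclHead, hψ, hv], by simp [emb, headSubEdge, hψ]⟩
  · have hψ : pathPsi n O e = true := hk
    exact ⟨e, by simp [nclHead, hψ, hv], by simp [emb, headSubEdge, hψ]⟩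

theorem nclValid_pathPsi (hO : nclValid (pathEnds ends n) (pathW w n) (pathC w c n) O) :
    nclValid ends w c (pathPsi n O) :=
  nclValid_iff.mpr fun v =>
    (nclValid_iff.mp hO (Sum.inl v)).trans (pathInflow_le_nclInflow_pathPsi hO v)

theorem pathPsi_reflTransGen_of_move {O' : (Σ e : E, Fin (n e + 1)) → Bool}
    (h : nclMove (pathEnds ends n) (pathW w n) (pathC w c n) O O') :
    Relation.ReflTransGen (nclMove ends w c) (pathPsi n O) (pathPsi n O') := by
  obtain ⟨hO, hO', hdiff⟩ := h
  rcases hdiff.comp_injective (g := fun e => ⟨e, Fin.last (n e)⟩)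
    (fun _ _ h => congrArg Sigma.fst h) with heq | hdiff'
  · rw [show pathPsi n O = pathPsi n O' from heq]
  · exact .single ⟨nclValid_pathPsi hO, nclValid_pathPsi hO', hdiff'⟩

theorem nclValid_pathSweep (hloop : ∀ e : E, (ends e).1 ≠ (ends e).2) {o o' : E → Bool}
    {e₀ : E} (ho : nclValid ends w c o) (ho' : nclValid ends w c o') (hne : o e₀ ≠ o' e₀)
    (hagree : ∀ e, e ≠ e₀ → o e = o' e) (k : ℕ) :
    nclValid (pathEnds ends n) (pathW w n) (pathC w c n) (pathSweep n o e₀ k) := by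
  refine nclValid_iff.mpr ?_
  rintro (v | ⟨e, j⟩)
  · have key : ∀ o'' : E → Bool, nclValid ends w c o'' → (∀ e, e ≠ e₀ → o e = o'' e) →
        nclHead ends o'' e₀ ≠ v →
        c v ≤ nclInflow (pathEnds ends n) (pathW w n) (pathSweep n o e₀ k) (Sum.inl v) := by
      intro o'' ho'' hagree'' hv
      refine (nclValid_iff.mp ho'' v).trans (nclInflow_le_pathInflow fun e he => ?_)
      have he₀ : e ≠ e₀ := by rintro rfl; exact hv he
      simp [pathSweep, headSubEdge, he₀, hagree'' e he₀]
    by_cases hv : nclHead ends o e₀ = v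
    · exact key o' ho' hagree (hv ▸ (nclHead_ne_of_ne (hloop e₀) hne).symm)
    · exact key o ho (fun _ _ => rfl) hv
  · refine le_pathInflow_connector (ends := ends) ?_
    by_cases he : e = e₀
    · subst he
      simp only [pathSweep, if_true, Fin.val_castSucc, Fin.val_succ, decide_eq_true_eq,
        decide_eq_false_iff_not]
      omega
    · cases h : o e <;> simp [pathSweep, he, h]

theorem pathSweep_reflTransGen {o : E → Bool} {e₀ : E}
    (hvalid : ∀ k, nclValid (pathEnds ends n) (pathW w n) (pathC w c n) (pathSweep n o e₀ k))
    {a b : ℕ} (ha : a ≤ n e₀ + 1) (hb : b ≤ n e₀ + 1) :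
    Relation.ReflTransGen (nclMove (pathEnds ends n) (pathW w n) (pathC w c n))
      (pathSweep n o e₀ a) (pathSweep n o e₀ b) := by
  have hmove : ∀ k < n e₀ + 1, nclMove (pathEnds ends n) (pathW w n) (pathC w c n)
      (pathSweep n o e₀ k) (pathSweep n o e₀ (k + 1)) := fun k hk =>
    ⟨hvalid k, hvalid (k + 1), nclDifferOne_pathSweep_succ hk⟩
  refine (reflTransGen_of_succ (fun i j => nclMove (pathEnds ends n) (pathW w n) (pathC w c n)
    (pathSweep n o e₀ i) (pathSweep n o e₀ j)) (fun k hk => hmove k ?_)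
    (fun k hk => (hmove k ?_).symm)).lift _ fun _ _ h => h
  all_goals
    simp only [Set.mem_Ico] at hk
    omega

theorem pathPhi_reflTransGen_of_move (hloop : ∀ e : E, (ends e).1 ≠ (ends e).2)
    {o o' : E → Bool} (h : nclMove ends w c o o') :
    Relation.ReflTransGen (nclMove (pathEnds ends n) (pathW w n) (pathC w c n))
      (pathPhi n o) (pathPhi n o') := by
  obtain ⟨ho, ho', e₀, hne, hagree⟩ := h
  rw [← pathSweep_eq_pathPhi (e₀ := e₀) (fun _ _ => rfl), ← pathSweep_eq_pathPhi hagree]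
  exact pathSweep_reflTransGen (nclValid_pathSweep hloop ho ho' hne hagree)
    (by split <;> omega) (by split <;> omega)

end Subdivision

section PathSubdivision

variable {V E : Type} [Fintype E] [DecidableEq E] [DecidableEq V]

theorem ncl_path_subdivision_full_to_full_general (ends : E → V × V) (w : E → ℕ)
    (c : V → ℕ) (n : E → ℕ) (hloop : ∀ e : E, (ends e).1 ≠ (ends e).2)
    (oS oT : E → Bool) :
    nclEquiv ends w c oS oT ↔
      nclEquiv (pathEnds ends n) (pathW w n) (pathC w c n)
        (pathPhi n oS) (pathPhi n oT) :=
  ⟨fun h => Relation.ReflTransGen.lift' (pathPhi n)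
      (fun _ _ => pathPhi_reflTransGen_of_move hloop) _ _ h,
    fun h => Relation.ReflTransGen.lift' (pathPsi n)
      (fun _ _ => pathPsi_reflTransGen_of_move) _ _ h⟩

/-- Under the bijection between orientations of `G` and consistent
orientations of its subdivision `H`, the answer to the full-to-full
reachability question is the same in `G` and in `H`. -/
theorem ncl_path_subdivision_full_to_full (ends : E → V × V) (w : E → ℕ)
    (c : V → ℕ) (n : E → ℕ) (hloop : ∀ e : E, (ends e).1 ≠ (ends e).2)
    (oS oT : E → Bool) (hS : nclValid ends w c oS) (hT : nclValid ends w c oT) :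
    nclEquiv ends w c oS oT ↔
      nclEquiv (pathEnds ends n) (pathW w n) (pathC w c n)
        (pathPhi n oS) (pathPhi n oT) :=
  ncl_path_subdivision_full_to_full_general ends w c n hloop oS oT

end PathSubdivision
end

section
/- Let S and T be two free multi-configurations of m unit-square robots, all of whose configurations lie on the half-integer grid, in a polygonal workspace. If S ≡ T via coordinated continuous motion, and additionally each robot's motion is constrained so that at every moment at most one robot is away from a grid configuration, then the induced sequence of multi-sets of grid configurations forms a path in the discrete transition graph whose nodes are free grid multi-configurations and whose edges are single-robot moves between adjacent grid configurations. -/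
/-- The open axis-aligned unit square centered at `p`. -/
def unitSquare (p : ℝ × ℝ) : Set (ℝ × ℝ) :=
  {x | |x.1 - p.1| < 1/2 ∧ |x.2 - p.2| < 1/2}

/-- The half-integer grid `(1/2)ℤ²`. -/
def halfGrid : Set (ℝ × ℝ) :=
  {p | (∃ k : ℤ, p.1 = k / 2) ∧ ∃ k : ℤ, p.2 = k / 2}

/-- A free multi-configuration: all unit squares lie in the workspace and
are pairwise disjoint. -/
def FreeMulti (W : Set (ℝ × ℝ)) {m : ℕ} (C : Fin m → ℝ × ℝ) : Prop :=
  (∀ i, unitSquare (C i) ⊆ W) ∧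
    ∀ i j, i ≠ j → Disjoint (unitSquare (C i)) (unitSquare (C j))

/-- Two grid configurations are adjacent if they differ by `1/2` in exactly
one coordinate. -/
def gridAdj (p q : ℝ × ℝ) : Prop :=
  (|p.1 - q.1| = 1/2 ∧ p.2 = q.2) ∨ (p.1 = q.1 ∧ |p.2 - q.2| = 1/2)

/-- A single-robot move in the discrete transition graph: one robot moves to
an adjacent free grid configuration, both multi-configurations are free, and
the straight-line motion between them is collision-free. -/
def DiscreteMove (W : Set (ℝ × ℝ)) {m : ℕ} (C C' : Fin m → ℝ × ℝ) : Prop :=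
  ∃ i, gridAdj (C i) (C' i) ∧ (∀ j, j ≠ i → C' j = C j) ∧
    FreeMulti W C ∧ FreeMulti W C' ∧
    ∀ t ∈ Set.Icc (0:ℝ) 1,
      FreeMulti W (Function.update C i ((1 - t) • C i + t • C' i))

def Hset : Set ℝ := {x | ∃ k : ℤ, x = k / 2}

lemma mem_halfGrid_iff {p : ℝ × ℝ} : p ∈ halfGrid ↔ p.1 ∈ Hset ∧ p.2 ∈ Hset := Iff.rfl

lemma Hset_sep {x y : ℝ} (hx : x ∈ Hset) (hy : y ∈ Hset) (h : |x - y| < 1/2) : x = y := by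
  obtain ⟨k, rfl⟩ := hx; obtain ⟨l, rfl⟩ := hy
  have hkl : k = l := by
    by_contra hne
    have h1 : (1:ℝ) ≤ |(k:ℝ) - l| := by
      have h2 : (1:ℤ) ≤ |k - l| := by
        rcases abs_pos.2 (sub_ne_zero.2 hne) with hp
        omega
      have h4 : ((1:ℤ):ℝ) ≤ ((|k - l| : ℤ) : ℝ) := by exact_mod_cast h2
      rwa [Int.cast_abs, Int.cast_sub, Int.cast_one] at h4
    have h3 : |(k:ℝ)/2 - (l:ℝ)/2| = |(k:ℝ) - l|/2 := by
      rw [show (k:ℝ)/2 - (l:ℝ)/2 = ((k:ℝ) - l)/2 by ring, abs_div]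
      norm_num
    rw [h3] at h
    linarith
  rw [hkl]

lemma isClosed_Hset : IsClosed Hset := by
  have : Hset = (fun x : ℝ => 2 * x) ⁻¹' (Set.range ((↑) : ℤ → ℝ)) := by
    ext x
    constructor
    · rintro ⟨k, rfl⟩; exact ⟨k, by ring⟩
    · rintro ⟨k, hk⟩; exact ⟨k, by simp at hk; linarith⟩
  rw [this]
  exact Int.isClosedEmbedding_coe_real.isClosed_range.preimage (by continuity)

lemma isClosed_halfGrid : IsClosed halfGrid := by
  have : halfGrid = Prod.fst ⁻¹' Hset ∩ Prod.snd ⁻¹' Hset := rfl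
  rw [this]
  exact (isClosed_Hset.preimage continuous_fst).inter (isClosed_Hset.preimage continuous_snd)

lemma Hset_gap {x y : ℝ} (hx : x ∈ Hset) (hy : y ∈ Hset) (h : x < y) : x + 1/2 ≤ y := by
  obtain ⟨k, rfl⟩ := hx; obtain ⟨l, rfl⟩ := hy
  have : k < l := by exact_mod_cast (by linarith : (k:ℝ) < l)
  have : (k:ℝ) + 1 ≤ l := by exact_mod_cast (by omega : k + 1 ≤ l)
  linarith

lemma exists_notH_between {x y : ℝ} (hx : x ∈ Hset) (hy : y ∈ Hset) (h : x < y) :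
    ∃ c, c ∉ Hset ∧ x < c ∧ c < y := by
  refine ⟨x + 1/4, ?_, by linarith, by linarith [Hset_gap hx hy h]⟩
  rintro ⟨j, hj⟩
  obtain ⟨k, rfl⟩ := hx
  have h5 : (2*(k:ℝ) + 1) = 2*(j:ℝ) := by
    have : (k:ℝ)/2 + 1/4 = (j:ℝ)/2 := hj
    linarith
  have : 2*k + 1 = 2*j := by exact_mod_cast h5
  omega


lemma mem_closed_of_Ioo {f : ℝ → ℝ} {a b c : ℝ} (hab : a < b) (hc : c ∈ Set.Icc a b)
    (hcc : c ∈ closure (Set.Ioo a b))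
    (hf : ContinuousWithinAt f (Set.Icc a b) c) {K : Set ℝ} (hK : IsClosed K)
    (h : ∀ s ∈ Set.Ioo a b, f s ∈ K) : f c ∈ K := by
  have hne : (nhdsWithin c (Set.Ioo a b)).NeBot := mem_closure_iff_nhdsWithin_neBot.1 hcc
  have ht : Filter.Tendsto f (nhdsWithin c (Set.Ioo a b)) (nhds (f c)) :=
    (hf.mono Set.Ioo_subset_Icc_self)
  exact hK.mem_of_tendsto ht (Filter.eventually_iff_exists_mem.2
    ⟨Set.Ioo a b, self_mem_nhdsWithin, h⟩)

lemma mem_closed_of_left {f : ℝ → ℝ} {a b : ℝ} (hab : a < b)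
    (hf : ContinuousWithinAt f (Set.Icc a b) a) {K : Set ℝ} (hK : IsClosed K)
    (h : ∀ s ∈ Set.Ioo a b, f s ∈ K) : f a ∈ K := by
  refine mem_closed_of_Ioo hab (Set.left_mem_Icc.2 hab.le) ?_ hf hK h
  rw [closure_Ioo hab.ne]; exact Set.left_mem_Icc.2 hab.le

lemma mem_closed_of_right {f : ℝ → ℝ} {a b : ℝ} (hab : a < b)
    (hf : ContinuousWithinAt f (Set.Icc a b) b) {K : Set ℝ} (hK : IsClosed K)
    (h : ∀ s ∈ Set.Ioo a b, f s ∈ K) : f b ∈ K := by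
  refine mem_closed_of_Ioo hab (Set.right_mem_Icc.2 hab.le) ?_ hf hK h
  rw [closure_Ioo hab.ne]; exact Set.right_mem_Icc.2 hab.le

lemma mem_closed_of_Ioc {f : ℝ → ℝ} {a b : ℝ} (hab : a < b)
    (hf : ContinuousWithinAt f (Set.Icc a b) a) {K : Set ℝ} (hK : IsClosed K)
    (h : ∀ s ∈ Set.Ioc a b, f s ∈ K) : f a ∈ K := by
  have h2 : ∀ s ∈ Set.Ioo a b, f s ∈ K := fun s hs => h s ⟨hs.1, hs.2.le⟩
  exact mem_closed_of_left hab hf hK h2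

lemma constOn_H {f : ℝ → ℝ} {a b : ℝ} (hf : ContinuousOn f (Set.Icc a b))
    (hH : ∀ s ∈ Set.Ioo a b, f s ∈ Hset) :
    ∀ s1 ∈ Set.Ioo a b, ∀ s2 ∈ Set.Ioo a b, f s1 = f s2 := by
  intro s1 h1 s2 h2
  by_contra hne
  have hu : Set.uIcc s1 s2 ⊆ Set.Ioo a b := Set.ordConnected_Ioo.uIcc_subset h1 h2
  have hf' : ContinuousOn f (Set.uIcc s1 s2) := hf.mono (hu.trans Set.Ioo_subset_Icc_self)
  have hlt : min (f s1) (f s2) < max (f s1) (f s2) := min_lt_max.2 hne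
  have hmin : min (f s1) (f s2) ∈ Hset := by
    rcases min_cases (f s1) (f s2) with ⟨h,_⟩|⟨h,_⟩ <;> rw [h]
    exacts [hH s1 h1, hH s2 h2]
  have hmax : max (f s1) (f s2) ∈ Hset := by
    rcases max_cases (f s1) (f s2) with ⟨h,_⟩|⟨h,_⟩ <;> rw [h]
    exacts [hH s1 h1, hH s2 h2]
  obtain ⟨c, hcH, hc1, hc2⟩ := exists_notH_between hmin hmax hlt
  have hcmem : c ∈ Set.uIcc (f s1) (f s2) := by
    rw [Set.uIcc_eq_union]
    rcases le_total (f s1) (f s2) with h | h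
    · left; constructor
      · calc f s1 = min (f s1) (f s2) := (min_eq_left h).symm
          _ ≤ c := hc1.le
      · calc c ≤ max (f s1) (f s2) := hc2.le
          _ = f s2 := max_eq_right h
    · right; constructor
      · calc f s2 = min (f s1) (f s2) := (min_eq_right h).symm
          _ ≤ c := hc1.le
      · calc c ≤ max (f s1) (f s2) := hc2.le
          _ = f s1 := max_eq_left h
  obtain ⟨s, hs, hfs⟩ := intermediate_value_uIcc hf' hcmem
  exact hcH (hfs ▸ hH s (hu hs))

lemma stay_interval {g : ℝ → ℝ} {a b : ℝ} (hg : ContinuousOn g (Set.Icc a b))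
    (hnot : ∀ s ∈ Set.Ioo a b, g s ∉ Hset) {s0 : ℝ} (hs0 : s0 ∈ Set.Ioo a b) :
    ∃ h : ℝ, h ∈ Hset ∧ h + 1/2 ∈ Hset ∧ ∀ s ∈ Set.Ioo a b, g s ∈ Set.Ioo h (h + 1/2) := by
  set h : ℝ := (⌊2 * g s0⌋ : ℝ) / 2 with hh
  have hH : h ∈ Hset := ⟨⌊2 * g s0⌋, rfl⟩
  have hH2 : h + 1/2 ∈ Hset := ⟨⌊2 * g s0⌋ + 1, by push_cast; ring⟩
  have hs0mem : g s0 ∈ Set.Ioo h (h + 1/2) := by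
    constructor
    · rcases lt_or_eq_of_le (by linarith [Int.floor_le (2 * g s0)] : h ≤ g s0) with hlt | heq
      · exact hlt
      · exact absurd (heq ▸ hH) (hnot s0 hs0)
    · have := Int.lt_floor_add_one (2 * g s0); linarith
  refine ⟨h, hH, hH2, ?_⟩
  intro s hs
  have hu : Set.uIcc s s0 ⊆ Set.Ioo a b := Set.ordConnected_Ioo.uIcc_subset hs hs0
  have hg' : ContinuousOn g (Set.uIcc s s0) := hg.mono (hu.trans Set.Ioo_subset_Icc_self)
  constructor
  · by_contra hle
    push_neg at hle
    have : h ∈ Set.uIcc (g s) (g s0) := by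
      rw [Set.mem_uIcc]; left; exact ⟨hle, hs0mem.1.le⟩
    obtain ⟨s', hs', hgs'⟩ := intermediate_value_uIcc hg' this
    exact hnot s' (hu hs') (hgs' ▸ hH)
  · by_contra hle
    push_neg at hle
    have : h + 1/2 ∈ Set.uIcc (g s) (g s0) := by
      rw [Set.mem_uIcc]; right; exact ⟨hs0mem.2.le, hle⟩
    obtain ⟨s', hs', hgs'⟩ := intermediate_value_uIcc hg' this
    exact hnot s' (hu hs') (hgs' ▸ hH2)

lemma no_switch {f g : ℝ → ℝ} {u v : ℝ} (huv : u < v)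
    (hf : ContinuousOn f (Set.Icc u v)) (hg : ContinuousOn g (Set.Icc u v))
    (hcover : ∀ s ∈ Set.Icc u v, f s ∈ Hset ∨ g s ∈ Hset)
    (hnot : ∀ s ∈ Set.Icc u v, ¬(f s ∈ Hset ∧ g s ∈ Hset))
    (hu : f u ∈ Hset) : f v ∈ Hset := by
  set A : Set ℝ := {s | s ∈ Set.Icc u v ∧ f s ∈ Hset} with hA
  have hAne : A.Nonempty := ⟨u, Set.left_mem_Icc.2 huv.le, hu⟩
  have hAbdd : BddAbove A := ⟨v, fun s hs => hs.1.2⟩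
  have hAclosed : IsClosed A := by
    have : A = Set.Icc u v ∩ f ⁻¹' Hset := rfl
    rw [this]
    exact hf.preimage_isClosed_of_isClosed isClosed_Icc isClosed_Hset
  set c := sSup A with hc
  have hcA : c ∈ A := hAclosed.csSup_mem hAne hAbdd
  rcases eq_or_lt_of_le hcA.1.2 with heq | hlt
  · rw [← heq]; exact hcA.2
  · exfalso
    have hoffc : ∀ s ∈ Set.Ioc c v, f s ∉ Hset := by
      intro s hs hmem
      have : s ∈ A := ⟨⟨hcA.1.1.trans hs.1.le, hs.2⟩, hmem⟩
      exact absurd (le_csSup hAbdd this) (not_le.2 hs.1)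
    have hgc : ∀ s ∈ Set.Ioc c v, g s ∈ Hset := by
      intro s hs
      rcases hcover s ⟨hcA.1.1.trans hs.1.le, hs.2⟩ with h | h
      · exact absurd h (hoffc s hs)
      · exact h
    have hgcc : g c ∈ Hset := by
      refine mem_closed_of_Ioc hlt ?_ isClosed_Hset hgc
      exact (hg.mono (Set.Icc_subset_Icc hcA.1.1 le_rfl)).continuousWithinAt
        (Set.left_mem_Icc.2 hlt.le)
    exact hnot c hcA.1 ⟨hcA.2, hgcc⟩

lemma unitSquare_disjoint_iff {p q : ℝ × ℝ} :
    Disjoint (unitSquare p) (unitSquare q) ↔ 1 ≤ |p.1 - q.1| ∨ 1 ≤ |p.2 - q.2| := by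
  constructor
  · intro hd
    by_contra hc
    push_neg at hc
    obtain ⟨h1, h2⟩ := hc
    have hmem1 : ((p.1 + q.1)/2, (p.2 + q.2)/2) ∈ unitSquare p := by
      constructor
      · rw [show (p.1 + q.1)/2 - p.1 = (q.1 - p.1)/2 by ring, abs_div, abs_sub_comm] at *
        rw [abs_two]; rw [abs_sub_comm] at h1; linarith
      · rw [show (p.2 + q.2)/2 - p.2 = (q.2 - p.2)/2 by ring, abs_div, abs_two]
        rw [abs_sub_comm] at h2; linarith
    have hmem2 : ((p.1 + q.1)/2, (p.2 + q.2)/2) ∈ unitSquare q := by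
      constructor
      · show |(p.1 + q.1)/2 - q.1| < 1/2
        rw [show (p.1 + q.1)/2 - q.1 = (p.1 - q.1)/2 by ring, abs_div, abs_two]; linarith
      · show |(p.2 + q.2)/2 - q.2| < 1/2
        rw [show (p.2 + q.2)/2 - q.2 = (p.2 - q.2)/2 by ring, abs_div, abs_two]; linarith
    exact Set.not_disjoint_iff.2 ⟨_, hmem1, hmem2⟩ hd
  · intro h
    rw [Set.disjoint_left]
    rintro x ⟨hx1, hx2⟩ ⟨hy1, hy2⟩
    rcases h with h | h
    · have h3 : |p.1 - q.1| ≤ |x.1 - p.1| + |x.1 - q.1| := by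
        calc |p.1 - q.1| = |(x.1 - q.1) - (x.1 - p.1)| := by ring_nf
          _ ≤ |x.1 - q.1| + |x.1 - p.1| := abs_sub _ _
          _ = |x.1 - p.1| + |x.1 - q.1| := by ring
      linarith
    · have h3 : |p.2 - q.2| ≤ |x.2 - p.2| + |x.2 - q.2| := by
        calc |p.2 - q.2| = |(x.2 - q.2) - (x.2 - p.2)| := by ring_nf
          _ ≤ |x.2 - q.2| + |x.2 - p.2| := abs_sub _ _
          _ = |x.2 - p.2| + |x.2 - q.2| := by ring
      linarith

lemma free_endpoint {W : Set (ℝ × ℝ)} {m : ℕ} {C : Fin m → ℝ × ℝ} {i : Fin m} {Q : ℝ × ℝ}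
    (hC : FreeMulti W C)
    (h : ∀ t ∈ Set.Ioo (0:ℝ) 1, FreeMulti W (Function.update C i ((1 - t) • C i + t • Q))) :
    FreeMulti W (Function.update C i Q) := by
  set P := C i with hP
  set M : ℝ := |Q.1 - P.1| + |Q.2 - P.2| + 1 with hM
  have hMpos : 0 < M := by positivity
  have habs1 : ∀ t : ℝ, ((1 - t) • P + t • Q).1 - Q.1 = (1 - t) * (P.1 - Q.1) := by
    intro t; simp only [Prod.fst_add, Prod.smul_fst, smul_eq_mul]; ring
  have habs2 : ∀ t : ℝ, ((1 - t) • P + t • Q).2 - Q.2 = (1 - t) * (P.2 - Q.2) := by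
    intro t; simp only [Prod.snd_add, Prod.smul_snd, smul_eq_mul]; ring
  have hbound : ∀ t ∈ Set.Ioo (0:ℝ) 1, |((1 - t) • P + t • Q).1 - Q.1| ≤ (1 - t) * M ∧
      |((1 - t) • P + t • Q).2 - Q.2| ≤ (1 - t) * M := by
    intro t ht
    have h1t : (0:ℝ) ≤ 1 - t := by linarith [ht.2]
    constructor
    · rw [habs1, abs_mul, abs_of_nonneg h1t]
      have hle : |P.1 - Q.1| ≤ M := by rw [hM, abs_sub_comm]; nlinarith [abs_nonneg (Q.2 - P.2)]
      nlinarith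
    · rw [habs2, abs_mul, abs_of_nonneg h1t]
      have hle : |P.2 - Q.2| ≤ M := by rw [hM, abs_sub_comm]; nlinarith [abs_nonneg (Q.1 - P.1)]
      nlinarith
  have tchoice : ∀ ε : ℝ, 0 < ε → ∃ t ∈ Set.Ioo (0:ℝ) 1, (1 - t) * M < ε := by
    intro ε hε
    refine ⟨max (1 - ε/(2*M)) (1/2), ⟨?_, ?_⟩, ?_⟩
    · have h12 : (0:ℝ) < 1/2 := by norm_num
      exact h12.trans_le (le_max_right _ _)
    · apply max_lt
      · have : 0 < ε/(2*M) := by positivity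
        linarith
      · norm_num
    · have h1 : 1 - max (1 - ε/(2*M)) (1/2) ≤ ε/(2*M) := by
        have := le_max_left (1 - ε/(2*M)) (1/2)
        linarith
      have h2 : (1 - max (1 - ε/(2*M)) (1/2)) * M ≤ (ε/(2*M)) * M := by
        apply mul_le_mul_of_nonneg_right h1 hMpos.le
      have h3 : (ε/(2*M)) * M = ε/2 := by field_simp
      linarith
  -- the square at Q is in the workspace
  have hW : unitSquare Q ⊆ W := by
    intro y hy
    obtain ⟨hy1, hy2⟩ := hy
    set ε : ℝ := 1/2 - max |y.1 - Q.1| |y.2 - Q.2| with hε'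
    have hε : 0 < ε := by
      have := max_lt hy1 hy2
      rw [hε']; linarith
    obtain ⟨t, ht, hlt⟩ := tchoice ε hε
    have hb := hbound t ht
    have hmem : y ∈ unitSquare ((1 - t) • P + t • Q) := by
      constructor
      · have h4 : |y.1 - ((1 - t) • P + t • Q).1| ≤ |y.1 - Q.1| + |((1 - t) • P + t • Q).1 - Q.1| := by
          calc |y.1 - ((1 - t) • P + t • Q).1|
              ≤ |y.1 - Q.1| + |Q.1 - ((1 - t) • P + t • Q).1| := abs_sub_le _ _ _
            _ = |y.1 - Q.1| + |((1 - t) • P + t • Q).1 - Q.1| := by rw [abs_sub_comm Q.1]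
        have h5 : |y.1 - Q.1| ≤ max |y.1 - Q.1| |y.2 - Q.2| := le_max_left _ _
        show |y.1 - ((1 - t) • P + t • Q).1| < 1/2
        calc |y.1 - ((1 - t) • P + t • Q).1| ≤ |y.1 - Q.1| + |((1 - t) • P + t • Q).1 - Q.1| := h4
          _ < |y.1 - Q.1| + ε := by linarith [hb.1]
          _ ≤ 1/2 := by rw [hε']; linarith
      · have h4 : |y.2 - ((1 - t) • P + t • Q).2| ≤ |y.2 - Q.2| + |((1 - t) • P + t • Q).2 - Q.2| := by
          calc |y.2 - ((1 - t) • P + t • Q).2|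
              ≤ |y.2 - Q.2| + |Q.2 - ((1 - t) • P + t • Q).2| := abs_sub_le _ _ _
            _ = |y.2 - Q.2| + |((1 - t) • P + t • Q).2 - Q.2| := by rw [abs_sub_comm Q.2]
        have h5 : |y.2 - Q.2| ≤ max |y.1 - Q.1| |y.2 - Q.2| := le_max_right _ _
        show |y.2 - ((1 - t) • P + t • Q).2| < 1/2
        calc |y.2 - ((1 - t) • P + t • Q).2| ≤ |y.2 - Q.2| + |((1 - t) • P + t • Q).2 - Q.2| := h4
          _ < |y.2 - Q.2| + ε := by linarith [hb.2]
          _ ≤ 1/2 := by rw [hε']; linarith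
    have := (h t ht).1 i
    rw [Function.update_self] at this
    exact this hmem
  -- the square at Q is disjoint from all other squares
  have hkey : ∀ k, k ≠ i → Disjoint (unitSquare Q) (unitSquare (C k)) := by
    intro k hki
    rw [unitSquare_disjoint_iff]
    by_contra hcon
    push_neg at hcon
    obtain ⟨h1, h2⟩ := hcon
    set ε : ℝ := min (1 - |Q.1 - (C k).1|) (1 - |Q.2 - (C k).2|) with hε'
    have hε : 0 < ε := lt_min (by linarith) (by linarith)
    obtain ⟨t, ht, hlt⟩ := tchoice ε hε
    have hb := hbound t ht
    have hd := (h t ht).2 i k (fun he => hki he.symm)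
    rw [Function.update_self, Function.update_of_ne hki, unitSquare_disjoint_iff] at hd
    have e1 : |((1 - t) • P + t • Q).1 - (C k).1| < 1 := by
      calc |((1 - t) • P + t • Q).1 - (C k).1|
          ≤ |((1 - t) • P + t • Q).1 - Q.1| + |Q.1 - (C k).1| := abs_sub_le _ _ _
        _ < ε + |Q.1 - (C k).1| := by linarith [hb.1]
        _ ≤ 1 := by have := min_le_left (1 - |Q.1 - (C k).1|) (1 - |Q.2 - (C k).2|); rw [hε']; linarith
    have e2 : |((1 - t) • P + t • Q).2 - (C k).2| < 1 := by
      calc |((1 - t) • P + t • Q).2 - (C k).2|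
          ≤ |((1 - t) • P + t • Q).2 - Q.2| + |Q.2 - (C k).2| := abs_sub_le _ _ _
        _ < ε + |Q.2 - (C k).2| := by linarith [hb.2]
        _ ≤ 1 := by have := min_le_right (1 - |Q.1 - (C k).1|) (1 - |Q.2 - (C k).2|); rw [hε']; linarith
    rcases hd with hd | hd
    · exact absurd hd (not_le.2 e1)
    · exact absurd hd (not_le.2 e2)
  constructor
  · intro k
    by_cases hk : k = i
    · subst hk; rw [Function.update_self]; exact hW
    · rw [Function.update_of_ne hk]; exact hC.1 k
  · intro j k hjk
    by_cases hji : j = i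
    · have hki : k ≠ i := fun he => hjk (hji.trans he.symm)
      rw [hji, Function.update_self, Function.update_of_ne hki]
      exact hkey k hki
    · by_cases hki : k = i
      · rw [hki, Function.update_self, Function.update_of_ne hji]
        exact (hkey j hji).symm
      · rw [Function.update_of_ne hji, Function.update_of_ne hki]
        exact hC.2 j k hjk

lemma halfGrid_swap {p : ℝ × ℝ} : p.swap ∈ halfGrid ↔ p ∈ halfGrid := by
  constructor <;> rintro ⟨h1, h2⟩ <;> exact ⟨h2, h1⟩

lemma gridAdj_swap {p q : ℝ × ℝ} : gridAdj p.swap q.swap ↔ gridAdj p q := by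
  unfold gridAdj
  rw [Prod.fst_swap, Prod.snd_swap, Prod.fst_swap, Prod.snd_swap]
  tauto

lemma Hset_endpoint {x h : ℝ} (hx : x ∈ Hset) (hh : h ∈ Hset) (hh2 : h + 1/2 ∈ Hset)
    (hxI : x ∈ Set.Icc h (h + 1/2)) : x = h ∨ x = h + 1/2 := by
  by_cases hxh : x = h
  · exact Or.inl hxh
  · right
    apply Hset_sep hx hh2
    have h1 : h ≤ x := hxI.1
    have h2 : x ≤ h + 1/2 := hxI.2
    have h3 : h < x := lt_of_le_of_ne h1 (Ne.symm hxh)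
    rw [abs_sub_lt_iff]
    constructor <;> linarith

lemma seg_core {γ : ℝ → ℝ × ℝ} {a b : ℝ} (hab : a < b)
    (hγ : ContinuousOn γ (Set.Icc a b))
    (hga : γ a ∈ halfGrid) (hgb : γ b ∈ halfGrid)
    (hoff : ∀ s ∈ Set.Ioo a b, γ s ∉ halfGrid)
    (hy : ∀ s ∈ Set.Ioo a b, (γ s).2 ∈ Hset)
    (hne : γ a ≠ γ b) :
    gridAdj (γ a) (γ b) ∧
      ∀ t ∈ Set.Ioo (0:ℝ) 1, ∃ s ∈ Set.Ioo a b, γ s = (1 - t) • γ a + t • γ b := by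
  obtain ⟨s0, hs0⟩ : (Set.Ioo a b).Nonempty := Set.nonempty_Ioo.2 hab
  set f1 : ℝ → ℝ := fun s => (γ s).1 with hf1def
  set f2 : ℝ → ℝ := fun s => (γ s).2 with hf2def
  have hcont1 : ContinuousOn f1 (Set.Icc a b) := hγ.fst
  have hcont2 : ContinuousOn f2 (Set.Icc a b) := hγ.snd
  set h2 : ℝ := f2 s0 with hh2def
  have hf2 : ∀ s ∈ Set.Ioo a b, f2 s = h2 := fun s hs => constOn_H hcont2 hy s hs s0 hs0
  have ha2 : f2 a = h2 := by
    refine mem_closed_of_left hab (hcont2.continuousWithinAt (Set.left_mem_Icc.2 hab.le))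
      (isClosed_singleton (x := h2)) (fun s hs => ?_)
    rw [hf2 s hs]; exact rfl
  have hb2 : f2 b = h2 := by
    refine mem_closed_of_right hab (hcont2.continuousWithinAt (Set.right_mem_Icc.2 hab.le))
      (isClosed_singleton (x := h2)) (fun s hs => ?_)
    rw [hf2 s hs]; exact rfl
  have hx_not : ∀ s ∈ Set.Ioo a b, f1 s ∉ Hset := by
    intro s hs hmem
    exact hoff s hs ⟨hmem, hy s hs⟩
  obtain ⟨hh, hhH, hhH2, hmem⟩ := stay_interval hcont1 hx_not hs0
  have haI : f1 a ∈ Set.Icc hh (hh + 1/2) := by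
    refine mem_closed_of_left hab (hcont1.continuousWithinAt (Set.left_mem_Icc.2 hab.le))
      isClosed_Icc (fun s hs => Set.Ioo_subset_Icc_self (hmem s hs))
  have hbI : f1 b ∈ Set.Icc hh (hh + 1/2) := by
    refine mem_closed_of_right hab (hcont1.continuousWithinAt (Set.right_mem_Icc.2 hab.le))
      isClosed_Icc (fun s hs => Set.Ioo_subset_Icc_self (hmem s hs))
  have hane : f1 a ≠ f1 b := by
    intro heq
    apply hne
    have : (γ a).2 = (γ b).2 := ha2.trans hb2.symm
    exact Prod.ext heq this
  have haep := Hset_endpoint hga.1 hhH hhH2 haI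
  have hbep := Hset_endpoint hgb.1 hhH hhH2 hbI
  have hadj : gridAdj (γ a) (γ b) := by
    left
    refine ⟨?_, ha2.trans hb2.symm⟩
    rcases haep with h | h <;> rcases hbep with h' | h'
    · exact absurd (h.trans h'.symm) hane
    · show |(γ a).1 - (γ b).1| = 1/2
      rw [h, h', show hh - (hh + 1/2) = -(1/2) by ring, abs_neg,
        abs_of_pos (by norm_num : (0:ℝ) < 1/2)]
    · show |(γ a).1 - (γ b).1| = 1/2
      rw [h, h', show hh + 1/2 - hh = 1/2 by ring, abs_of_pos (by norm_num : (0:ℝ) < 1/2)]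
    · exact absurd (h.trans h'.symm) hane
  refine ⟨hadj, ?_⟩
  intro t ht
  have key : ∀ v : ℝ, v ∈ Set.Ioo (min (f1 a) (f1 b)) (max (f1 a) (f1 b)) →
      ∃ s ∈ Set.Ioo a b, f1 s = v := by
    intro v hv
    rcases lt_or_gt_of_ne hane with hlt | hgt
    · rw [min_eq_left hlt.le, max_eq_right hlt.le] at hv
      obtain ⟨s, hs, hfs⟩ := intermediate_value_Ioo hab.le hcont1 hv
      exact ⟨s, hs, hfs⟩
    · rw [min_eq_right hgt.le, max_eq_left hgt.le] at hv
      obtain ⟨s, hs, hfs⟩ := intermediate_value_Ioo' hab.le hcont1 hv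
      exact ⟨s, hs, hfs⟩
  set v : ℝ := (1 - t) * f1 a + t * f1 b with hvdef
  have hvmem : v ∈ Set.Ioo (min (f1 a) (f1 b)) (max (f1 a) (f1 b)) := by
    rcases lt_or_gt_of_ne hane with hlt | hgt
    · rw [min_eq_left hlt.le, max_eq_right hlt.le]
      constructor <;> nlinarith [ht.1, ht.2]
    · rw [min_eq_right hgt.le, max_eq_left hgt.le]
      constructor <;> nlinarith [ht.1, ht.2]
  obtain ⟨s, hs, hfs⟩ := key v hvmem
  refine ⟨s, hs, ?_⟩
  have hs2 : (γ s).2 = h2 := hf2 s hs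
  apply Prod.ext
  · show (γ s).1 = ((1 - t) • γ a + t • γ b).1
    rw [Prod.fst_add, Prod.smul_fst, Prod.smul_fst, smul_eq_mul, smul_eq_mul]
    exact hfs
  · show (γ s).2 = ((1 - t) • γ a + t • γ b).2
    rw [Prod.snd_add, Prod.smul_snd, Prod.smul_snd, smul_eq_mul, smul_eq_mul]
    rw [hs2, show (γ a).2 = f2 a from rfl, show (γ b).2 = f2 b from rfl, ha2, hb2]
    ring

lemma swap_comb (t : ℝ) (p q : ℝ × ℝ) :
    ((1 - t) • p + t • q).swap = (1 - t) • p.swap + t • q.swap := by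
  apply Prod.ext <;> simp

lemma seg_struct {γ : ℝ → ℝ × ℝ} {a b : ℝ} (hab : a < b)
    (hγ : ContinuousOn γ (Set.Icc a b))
    (hga : γ a ∈ halfGrid) (hgb : γ b ∈ halfGrid)
    (hoff : ∀ s ∈ Set.Ioo a b, γ s ∉ halfGrid)
    (honeH : ∀ s ∈ Set.Ioo a b, (γ s).1 ∈ Hset ∨ (γ s).2 ∈ Hset)
    (hne : γ a ≠ γ b) :
    gridAdj (γ a) (γ b) ∧
      ∀ t ∈ Set.Ioo (0:ℝ) 1, ∃ s ∈ Set.Ioo a b, γ s = (1 - t) • γ a + t • γ b := by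
  by_cases hcase : ∀ s ∈ Set.Ioo a b, (γ s).2 ∈ Hset
  · exact seg_core hab hγ hga hgb hoff hcase hne
  · push_neg at hcase
    obtain ⟨s2, hs2, hs2n⟩ := hcase
    have hs2x : (γ s2).1 ∈ Hset := (honeH s2 hs2).resolve_right hs2n
    have hall1 : ∀ s ∈ Set.Ioo a b, (γ s).1 ∈ Hset := by
      intro s hs
      by_contra hsx
      have hsy : (γ s).2 ∈ Hset := (honeH s hs).resolve_left hsx
      rcases lt_trichotomy s s2 with hlt | heq | hgt
      · have hsub : Set.Icc s s2 ⊆ Set.Ioo a b := Set.ordConnected_Ioo.out hs hs2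
        have hsub' : Set.Icc s s2 ⊆ Set.Icc a b := hsub.trans Set.Ioo_subset_Icc_self
        have := no_switch (f := fun u => (γ u).2) (g := fun u => (γ u).1) hlt
          ((hγ.mono hsub').snd) ((hγ.mono hsub').fst)
          (fun u hu => (honeH u (hsub hu)).symm)
          (fun u hu hc => hoff u (hsub hu) ⟨hc.2, hc.1⟩) hsy
        exact hs2n this
      · exact hsx (heq ▸ hs2x)
      · have hsub : Set.Icc s2 s ⊆ Set.Ioo a b := Set.ordConnected_Ioo.out hs2 hs
        have hsub' : Set.Icc s2 s ⊆ Set.Icc a b := hsub.trans Set.Ioo_subset_Icc_self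
        have := no_switch (f := fun u => (γ u).1) (g := fun u => (γ u).2) hgt
          ((hγ.mono hsub').fst) ((hγ.mono hsub').snd)
          (fun u hu => honeH u (hsub hu))
          (fun u hu hc => hoff u (hsub hu) ⟨hc.1, hc.2⟩) hs2x
        exact hsx this
    -- apply seg_core to the swapped curve
    have hγ' : ContinuousOn (fun s => (γ s).swap) (Set.Icc a b) :=
      continuous_swap.comp_continuousOn hγ
    have hres := seg_core hab hγ' (halfGrid_swap.2 hga) (halfGrid_swap.2 hgb)
      (fun s hs hmem => hoff s hs (halfGrid_swap.1 hmem))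
      (fun s hs => by rw [Prod.snd_swap]; exact hall1 s hs)
      (fun he => hne (by
        have := congrArg Prod.swap he
        rwa [Prod.swap_swap, Prod.swap_swap] at this))
    constructor
    · exact gridAdj_swap.1 hres.1
    · intro t ht
      obtain ⟨s, hs, heq⟩ := hres.2 t ht
      refine ⟨s, hs, ?_⟩
      have := congrArg Prod.swap heq
      rwa [Prod.swap_swap, ← swap_comb, Prod.swap_swap] at this

lemma halfGrid_eq_of_close {p q : ℝ × ℝ} (hp : p ∈ halfGrid) (hq : q ∈ halfGrid)
    (h1 : |p.1 - q.1| < 1/2) (h2 : |p.2 - q.2| < 1/2) : p = q :=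
  Prod.ext (Hset_sep hp.1 hq.1 h1) (Hset_sep hp.2 hq.2 h2)

lemma offgrid_coord {z p q : ℝ × ℝ} (hp : p ∈ halfGrid) (hq : q ∈ halfGrid)
    (hadj : gridAdj p q) (hz : z ∈ openSegment ℝ p q) : z.1 ∈ Hset ∨ z.2 ∈ Hset := by
  obtain ⟨u, v, hu, hv, huv, heq⟩ := hz
  rcases hadj with ⟨h1, h2⟩ | ⟨h1, h2⟩
  · right
    have : z.2 = u * p.2 + v * q.2 := by
      rw [← heq, Prod.snd_add, Prod.smul_snd, Prod.smul_snd]; rfl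
    rw [this, ← h2, show u * p.2 + v * p.2 = (u + v) * p.2 by ring, huv, one_mul]
    exact hp.2
  · left
    have : z.1 = u * p.1 + v * q.1 := by
      rw [← heq, Prod.fst_add, Prod.smul_fst, Prod.smul_fst]; rfl
    rw [this, ← h1, show u * p.1 + v * p.1 = (u + v) * p.1 by ring, huv, one_mul]
    exact hp.1

lemma exists_pos_forall_fin {m : ℕ} (d : Fin m → ℝ) (hd : ∀ i, 0 < d i) :
    ∃ ε > 0, ∀ i, ε ≤ d i := by
  rcases Nat.eq_zero_or_pos m with rfl | hm
  · exact ⟨1, one_pos, fun i => i.elim0⟩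
  · have hne : (Finset.univ : Finset (Fin m)).Nonempty := ⟨⟨0, hm⟩, Finset.mem_univ _⟩
    refine ⟨Finset.univ.inf' hne d, ?_, fun i => Finset.inf'_le d (Finset.mem_univ i)⟩
    rw [gt_iff_lt, Finset.lt_inf'_iff]
    exact fun i _ => hd i

lemma window {m : ℕ} (π : Fin m → ℝ → ℝ × ℝ) (hcont : ∀ i, ContinuousOn (π i) (Set.Icc 0 1))
    {τ : ℝ} (hτ : τ ∈ Set.Icc (0:ℝ) 1) {δ : ℝ} (hδ : 0 < δ) :
    ∃ ε > 0, ∀ s ∈ Set.Icc (0:ℝ) 1, |s - τ| < ε →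
      ∀ i, |(π i s).1 - (π i τ).1| < δ ∧ |(π i s).2 - (π i τ).2| < δ := by
  have H : ∀ i, ∃ e > 0, ∀ s ∈ Set.Icc (0:ℝ) 1, dist s τ < e → dist (π i s) (π i τ) < δ := by
    intro i
    have h1 := Metric.continuousWithinAt_iff.1 ((hcont i).continuousWithinAt hτ) δ hδ
    obtain ⟨e, he, hsp⟩ := h1
    exact ⟨e, he, fun s hs hd => hsp hs hd⟩
  choose e he hspec using H
  obtain ⟨ε, hε, hle⟩ := exists_pos_forall_fin e he
  refine ⟨ε, hε, fun s hs hlt i => ?_⟩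
  have hd : dist (π i s) (π i τ) < δ := by
    refine hspec i s hs ?_
    rw [Real.dist_eq]
    exact lt_of_lt_of_le hlt (hle i)
  rw [Prod.dist_eq, max_lt_iff] at hd
  rw [← Real.dist_eq, ← Real.dist_eq]
  exact ⟨hd.1, hd.2⟩

lemma offgrid_persist {f : ℝ → ℝ × ℝ} {τ : ℝ} (hcont : ContinuousOn f (Set.Icc 0 1))
    (hτ : τ ∈ Set.Icc (0:ℝ) 1) (hoff : f τ ∉ halfGrid) :
    ∃ η > 0, ∀ s ∈ Set.Icc (0:ℝ) 1, |s - τ| < η → f s ∉ halfGrid := by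
  have hopen : IsOpen halfGridᶜ := isClosed_halfGrid.isOpen_compl
  obtain ⟨r, hr, hball⟩ := Metric.isOpen_iff.1 hopen (f τ) hoff
  obtain ⟨η, hη, hspec⟩ := Metric.continuousWithinAt_iff.1 (hcont.continuousWithinAt hτ) r hr
  refine ⟨η, hη, fun s hs hlt => hball ?_⟩
  rw [Metric.mem_ball]
  exact hspec hs (by rw [Real.dist_eq]; exact hlt)

noncomputable def lastGridTime {m : ℕ} (π : Fin m → ℝ → ℝ × ℝ) (i : Fin m) (τ : ℝ) : ℝ :=
  sSup {s | s ∈ Set.Icc 0 τ ∧ π i s ∈ halfGrid}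

lemma lgt_bdd {m : ℕ} (π : Fin m → ℝ → ℝ × ℝ) (i : Fin m) (τ : ℝ) :
    BddAbove {s | s ∈ Set.Icc 0 τ ∧ π i s ∈ halfGrid} :=
  ⟨τ, fun s hs => hs.1.2⟩

lemma lgt_ge {m : ℕ} {π : Fin m → ℝ → ℝ × ℝ} {i : Fin m} {τ a : ℝ}
    (ha : a ∈ Set.Icc 0 τ) (hga : π i a ∈ halfGrid) : a ≤ lastGridTime π i τ :=
  le_csSup (lgt_bdd π i τ) ⟨ha, hga⟩

lemma lgt_mem {m : ℕ} {π : Fin m → ℝ → ℝ × ℝ} {i : Fin m} {τ : ℝ}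
    (hcont : ContinuousOn (π i) (Set.Icc 0 1)) (hg0 : π i 0 ∈ halfGrid)
    (hτ0 : 0 ≤ τ) (hτ1 : τ ≤ 1) :
    lastGridTime π i τ ∈ Set.Icc 0 τ ∧ π i (lastGridTime π i τ) ∈ halfGrid := by
  have hne : {s | s ∈ Set.Icc 0 τ ∧ π i s ∈ halfGrid}.Nonempty :=
    ⟨0, ⟨le_rfl, hτ0⟩, hg0⟩
  have hclosed : IsClosed {s | s ∈ Set.Icc 0 τ ∧ π i s ∈ halfGrid} := by
    have heq : {s | s ∈ Set.Icc 0 τ ∧ π i s ∈ halfGrid} = Set.Icc 0 τ ∩ π i ⁻¹' halfGrid := rfl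
    rw [heq]
    exact (hcont.mono (Set.Icc_subset_Icc le_rfl hτ1)).preimage_isClosed_of_isClosed
      isClosed_Icc isClosed_halfGrid
  have := hclosed.csSup_mem hne (lgt_bdd π i τ)
  exact ⟨this.1, this.2⟩

lemma lgt_eq {m : ℕ} {π : Fin m → ℝ → ℝ × ℝ} {i : Fin m} {τ : ℝ}
    (hτ0 : 0 ≤ τ) (h : π i τ ∈ halfGrid) : lastGridTime π i τ = τ := by
  apply le_antisymm
  · exact csSup_le ⟨τ, ⟨hτ0, le_rfl⟩, h⟩ (fun s hs => hs.1.2)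
  · exact lgt_ge ⟨hτ0, le_rfl⟩ h

lemma lgt_off {m : ℕ} {π : Fin m → ℝ → ℝ × ℝ} {i : Fin m} {τ : ℝ}
    {s : ℝ} (hs1 : lastGridTime π i τ < s) (hs2 : s ≤ τ) (hs0 : 0 ≤ s) :
    π i s ∉ halfGrid := by
  intro hmem
  exact absurd (lgt_ge ⟨hs0, hs2⟩ hmem) (not_le.2 hs1)

lemma lgt_char {m : ℕ} {π : Fin m → ℝ → ℝ × ℝ} {i : Fin m} {τ a : ℝ}
    (ha : a ∈ Set.Icc 0 τ) (hga : π i a ∈ halfGrid)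
    (hoff : ∀ s, a < s → s ≤ τ → π i s ∉ halfGrid) : lastGridTime π i τ = a := by
  apply le_antisymm
  · refine csSup_le ⟨a, ha, hga⟩ (fun s hs => ?_)
    by_contra hlt
    push_neg at hlt
    exact hoff s hlt hs.1.2 hs.2
  · exact lgt_ge ha hga

/-- Sequentialized continuous motion between free grid multi-configurations
(at most one robot off-grid at any moment, and any off-grid robot lies
strictly between two adjacent grid configurations) induces a path from `S`
to `T` in the discrete transition graph whose nodes are free grid
multi-configurations and whose edges are single-robot moves between adjacent
grid configurations. -/
theorem sequentialized_motion_gives_discrete_path (W : Set (ℝ × ℝ)) (m : ℕ)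
    (S T : Fin m → ℝ × ℝ)
    (hSgrid : ∀ i, S i ∈ halfGrid) (hTgrid : ∀ i, T i ∈ halfGrid)
    (hSfree : FreeMulti W S) (hTfree : FreeMulti W T)
    (π : Fin m → ℝ → ℝ × ℝ)
    (hcont : ∀ i, ContinuousOn (π i) (Set.Icc 0 1))
    (hstart : Set.range (fun i => π i 0) = Set.range S)
    (hend : Set.range (fun i => π i 1) = Set.range T)
    (hfree : ∀ τ ∈ Set.Icc (0:ℝ) 1, FreeMulti W (fun i => π i τ))
    (hone : ∀ τ ∈ Set.Icc (0:ℝ) 1, ∀ i j,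
      π i τ ∉ halfGrid → π j τ ∉ halfGrid → i = j)
    (hseg : ∀ τ ∈ Set.Icc (0:ℝ) 1, ∀ i, π i τ ∉ halfGrid →
      ∃ p q : ℝ × ℝ, p ∈ halfGrid ∧ q ∈ halfGrid ∧ gridAdj p q ∧
        π i τ ∈ openSegment ℝ p q) :
    ∃ (N : ℕ) (Cs : ℕ → Fin m → ℝ × ℝ),
      Set.range (Cs 0) = Set.range S ∧
      Set.range (Cs N) = Set.range T ∧
      (∀ k ≤ N, (∀ i, Cs k i ∈ halfGrid) ∧ FreeMulti W (Cs k)) ∧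
      ∀ k < N, DiscreteMove W (Cs k) (Cs (k + 1)) := by
  classical
  have hg0 : ∀ i, π i 0 ∈ halfGrid := by
    intro i
    have hmem : π i 0 ∈ Set.range S := by rw [← hstart]; exact ⟨i, rfl⟩
    obtain ⟨j, hj⟩ := hmem
    rw [← hj]; exact hSgrid j
  have hg1 : ∀ i, π i 1 ∈ halfGrid := by
    intro i
    have hmem : π i 1 ∈ Set.range T := by rw [← hend]; exact ⟨i, rfl⟩
    obtain ⟨j, hj⟩ := hmem
    rw [← hj]; exact hTgrid j
  set P : ℝ → Prop := fun τ => ∃ (N : ℕ) (Cs : ℕ → Fin m → ℝ × ℝ),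
      Set.range (Cs 0) = Set.range S ∧
      (∀ k ≤ N, (∀ i, Cs k i ∈ halfGrid) ∧ FreeMulti W (Cs k)) ∧
      (∀ k < N, DiscreteMove W (Cs k) (Cs (k + 1))) ∧
      (∀ i, Cs N i = π i (lastGridTime π i τ)) with hPdef
  have hP0 : P 0 := by
    refine ⟨0, fun _ => fun i => π i 0, hstart, ?_, ?_, ?_⟩
    · intro k hk
      exact ⟨hg0, hfree 0 ⟨le_rfl, zero_le_one⟩⟩
    · intro k hk; omega
    · intro i
      rw [lgt_eq le_rfl (hg0 i)]
  have hopen : ∀ τ, 0 ≤ τ → τ < 1 → P τ → ∃ τ', τ < τ' ∧ τ' ≤ 1 ∧ P τ' := by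
    intro τ hτ0 hτ1 hP
    obtain ⟨N, Cs, hr, hnodes, hmoves, hcompat⟩ := hP
    obtain ⟨ε1, hε1, hwin⟩ := window π hcont ⟨hτ0, hτ1.le⟩ (by norm_num : (0:ℝ) < 1/8)
    have hperH : ∀ i, ∃ η > 0, π i τ ∉ halfGrid →
        ∀ s ∈ Set.Icc (0:ℝ) 1, |s - τ| < η → π i s ∉ halfGrid := by
      intro i
      by_cases hi : π i τ ∈ halfGrid
      · exact ⟨1, one_pos, fun h => absurd hi h⟩
      · obtain ⟨η, hη, hs⟩ := offgrid_persist (hcont i) ⟨hτ0, hτ1.le⟩ hi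
        exact ⟨η, hη, fun _ => hs⟩
    choose η hη hper using hperH
    obtain ⟨η0, hη0, hle⟩ := exists_pos_forall_fin η hη
    set r : ℝ := min ε1 η0 with hrdef
    have hrpos : 0 < r := lt_min hε1 hη0
    set τ' : ℝ := min (τ + r / 2) 1 with hτ'def
    have hτ'le1 : τ' ≤ 1 := min_le_right _ _
    have hττ' : τ < τ' := lt_min (by linarith) hτ1
    have hτ'win : τ' - τ < r := by
      have h1 : τ' ≤ τ + r / 2 := min_le_left _ _
      linarith
    have hτ'0 : 0 ≤ τ' := hτ0.trans hττ'.le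
    refine ⟨τ', hττ', hτ'le1, N, Cs, hr, hnodes, hmoves, ?_⟩
    intro i
    rw [hcompat i]
    by_cases hi : π i τ ∈ halfGrid
    · -- on grid at τ : the position of the last grid time is unchanged
      rw [lgt_eq hτ0 hi]
      set a' : ℝ := lastGridTime π i τ' with ha'def
      obtain ⟨ha'I, ha'g⟩ := lgt_mem (hcont i) (hg0 i) hτ'0 hτ'le1
      have hτa' : τ ≤ a' := lgt_ge ⟨hτ0, hττ'.le⟩ hi
      have ha'win : |a' - τ| < ε1 := by
        rw [abs_of_nonneg (by linarith)]
        have := ha'I.2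
        calc a' - τ ≤ τ' - τ := by linarith
          _ < r := hτ'win
          _ ≤ ε1 := min_le_left _ _
      have hcoord := hwin a' ⟨ha'I.1, ha'I.2.trans hτ'le1⟩ ha'win i
      exact (halfGrid_eq_of_close ha'g hi (by linarith [hcoord.1])
        (by linarith [hcoord.2])).symm
    · -- off grid at τ : the last grid time itself is unchanged
      have hlgt : lastGridTime π i τ' = lastGridTime π i τ := by
        obtain ⟨haI, hag⟩ := lgt_mem (hcont i) (hg0 i) hτ0 hτ1.le
        refine lgt_char ⟨haI.1, haI.2.trans hττ'.le⟩ hag (fun s hs1 hs2 => ?_)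
        rcases le_or_gt s τ with hsτ | hsτ
        · exact lgt_off hs1 hsτ ((haI.1).trans (le_of_lt hs1))
        · refine hper i hi s ⟨hτ0.trans hsτ.le, hs2.trans hτ'le1⟩ ?_
          rw [abs_of_nonneg (by linarith)]
          calc s - τ ≤ τ' - τ := by linarith
            _ < r := hτ'win
            _ ≤ η0 := min_le_right _ _
            _ ≤ η i := hle i
      rw [hlgt]
  have hclosed : ∀ τ', τ' ∈ Set.Icc (0:ℝ) 1 →
      (∀ ε > 0, ∃ τ, 0 ≤ τ ∧ τ ≤ τ' ∧ τ' - ε < τ ∧ P τ) → P τ' := by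
    intro τ2 hτ2 hap
    obtain ⟨ε1, hε1, hwin⟩ := window π hcont hτ2 (by norm_num : (0:ℝ) < 1/8)
    obtain ⟨τ, hτ0, hττ2, hτnear, hPτ⟩ := hap ε1 hε1
    rcases eq_or_lt_of_le hττ2 with heq | hlt
    · rwa [heq] at hPτ
    obtain ⟨N, Cs, hr, hnodes, hmoves, hcompat⟩ := hPτ
    set C : Fin m → ℝ × ℝ := Cs N with hCdef
    have hCgrid : ∀ i, C i ∈ halfGrid := (hnodes N le_rfl).1
    have hCfree : FreeMulti W C := (hnodes N le_rfl).2
    have hτIcc : τ ∈ Set.Icc (0:ℝ) 1 := ⟨hτ0, hττ2.trans hτ2.2⟩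
    have hwin' : ∀ s, τ ≤ s → s ≤ τ2 → ∀ i,
        |(π i s).1 - (π i τ2).1| < 1/8 ∧ |(π i s).2 - (π i τ2).2| < 1/8 := by
      intro s h1 h2 i
      refine hwin s ⟨hτ0.trans h1, h2.trans hτ2.2⟩ ?_ i
      rw [abs_of_nonpos (by linarith)]
      linarith
    have hclose : ∀ s s', τ ≤ s → s ≤ τ2 → τ ≤ s' → s' ≤ τ2 → ∀ i,
        |(π i s).1 - (π i s').1| < 1/4 ∧ |(π i s).2 - (π i s').2| < 1/4 := by
      intro s s' h1 h2 h3 h4 i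
      obtain ⟨a1, a2⟩ := hwin' s h1 h2 i
      obtain ⟨b1, b2⟩ := hwin' s' h3 h4 i
      constructor
      · have ht := abs_sub_le (π i s).1 (π i τ2).1 (π i s').1
        rw [abs_sub_comm (π i τ2).1] at ht
        linarith
      · have ht := abs_sub_le (π i s).2 (π i τ2).2 (π i s').2
        rw [abs_sub_comm (π i τ2).2] at ht
        linarith
    have hgrideq : ∀ s s', τ ≤ s → s ≤ τ2 → τ ≤ s' → s' ≤ τ2 → ∀ i,
        π i s ∈ halfGrid → π i s' ∈ halfGrid → π i s = π i s' := by
      intro s s' h1 h2 h3 h4 i hg hg'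
      obtain ⟨c1, c2⟩ := hclose s s' h1 h2 h3 h4 i
      exact halfGrid_eq_of_close hg hg' (by linarith) (by linarith)
    have hClaimA : ∀ j, π j τ ∈ halfGrid → π j (lastGridTime π j τ2) = C j := by
      intro j hj
      have hCj : C j = π j τ := by rw [hcompat j, lgt_eq hτ0 hj]
      rw [hCj]
      obtain ⟨haI, hag⟩ := lgt_mem (hcont j) (hg0 j) hτ2.1 hτ2.2
      have hτle : τ ≤ lastGridTime π j τ2 := lgt_ge ⟨hτ0, hlt.le⟩ hj
      exact hgrideq _ _ hτle haI.2 le_rfl hlt.le j hag hj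
    by_cases hex : ∃ i, π i τ ∉ halfGrid
    · obtain ⟨i, hioff⟩ := hex
      have hothers : ∀ j, j ≠ i → π j τ ∈ halfGrid := by
        intro j hji
        by_contra hjoff
        exact hji (hone τ hτIcc j i hjoff hioff)
      set C' : Fin m → ℝ × ℝ := fun j => π j (lastGridTime π j τ2) with hC'def
      have hC'j : ∀ j, j ≠ i → C' j = C j := fun j hj => hClaimA j (hothers j hj)
      by_cases hCi : C' i = C i
      · have hCC : C' = C := by
          funext j
          by_cases hj : j = i
          · rw [hj]; exact hCi
          · exact hC'j j hj
        refine ⟨N, Cs, hr, hnodes, hmoves, fun j => ?_⟩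
        have : C' j = C j := by rw [hCC]
        exact this.symm
      · -- a single discrete move is needed
        set a : ℝ := lastGridTime π i τ with hadef
        obtain ⟨haI, hag⟩ := lgt_mem (hcont i) (hg0 i) hτ0 hτIcc.2
        have ha_lt_τ : a < τ := lt_of_le_of_ne haI.2 (fun he => hioff (he ▸ hag))
        have hoffa : ∀ s, a < s → s ≤ τ → π i s ∉ halfGrid :=
          fun s h1 h2 => lgt_off h1 h2 (haI.1.trans h1.le)
        set B : Set ℝ := {s | s ∈ Set.Icc τ τ2 ∧ π i s ∈ halfGrid} with hBdef
        have hBne : B.Nonempty := by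
          by_contra hBe
          rw [Set.not_nonempty_iff_eq_empty] at hBe
          have hoffall : ∀ s, a < s → s ≤ τ2 → π i s ∉ halfGrid := by
            intro s h1 h2 hmem
            rcases le_or_gt s τ with h | h
            · exact hoffa s h1 h hmem
            · have : s ∈ B := ⟨⟨h.le, h2⟩, hmem⟩
              rw [hBe] at this
              exact this
          have : lastGridTime π i τ2 = a :=
            lgt_char ⟨haI.1, haI.2.trans hlt.le⟩ hag hoffall
          apply hCi
          show π i (lastGridTime π i τ2) = C i
          rw [this, hcompat i]
        have hBclosed : IsClosed B := by
          have heq : B = Set.Icc τ τ2 ∩ π i ⁻¹' halfGrid := rfl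
          rw [heq]
          exact ((hcont i).mono (Set.Icc_subset_Icc hτ0 hτ2.2)).preimage_isClosed_of_isClosed
            isClosed_Icc isClosed_halfGrid
        have hBbdd : BddBelow B := ⟨τ, fun s hs => hs.1.1⟩
        set b : ℝ := sInf B with hbdef
        have hbB : b ∈ B := hBclosed.csInf_mem hBne hBbdd
        have hbg : π i b ∈ halfGrid := hbB.2
        have hoffb : ∀ s, τ ≤ s → s < b → π i s ∉ halfGrid := by
          intro s h1 h2 hmem
          have : s ∈ B := ⟨⟨h1, h2.le.trans hbB.1.2⟩, hmem⟩
          exact absurd (csInf_le hBbdd this) (not_le.2 h2)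
        have hτb : τ < b := lt_of_le_of_ne hbB.1.1 (fun he => hioff (he ▸ hbg))
        have hab : a < b := ha_lt_τ.trans hτb
        have hsub : Set.Icc a b ⊆ Set.Icc (0:ℝ) 1 :=
          Set.Icc_subset_Icc haI.1 (hbB.1.2.trans hτ2.2)
        have hoffab : ∀ s ∈ Set.Ioo a b, π i s ∉ halfGrid := by
          intro s hs
          rcases le_or_gt s τ with h | h
          · exact hoffa s hs.1 h
          · exact hoffb s h.le hs.2
        have hC'i : C' i = π i b := by
          rw [hC'def]
          show π i (lastGridTime π i τ2) = π i b
          obtain ⟨ha2I, ha2g⟩ := lgt_mem (hcont i) (hg0 i) hτ2.1 hτ2.2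
          have hb2 : b ≤ lastGridTime π i τ2 := lgt_ge ⟨haI.1.trans hab.le, hbB.1.2⟩ hbg
          exact hgrideq _ _ (hτb.le.trans hb2) ha2I.2 hτb.le hbB.1.2 i ha2g hbg
        have hCiab : C i = π i a := hcompat i
        have hCine : π i a ≠ π i b := by
          intro he
          exact hCi (by rw [hC'i, ← he, hCiab])
        obtain ⟨hadj, hsweep⟩ := seg_struct hab ((hcont i).mono hsub) hag hbg hoffab
          (fun s hs => by
            obtain ⟨p, q, hp, hq, hpq, hmem⟩ :=
              hseg s (hsub (Set.Ioo_subset_Icc_self hs)) i (hoffab s hs)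
            exact offgrid_coord hp hq hpq hmem)
          hCine
        have hτIoo : τ ∈ Set.Ioo a b := ⟨ha_lt_τ, hτb⟩
        have hconst : ∀ j, j ≠ i → ∀ s ∈ Set.Ioo a b, π j s = C j := by
          intro j hji s hs
          have hgridj : ∀ u ∈ Set.Ioo a b, π j u ∈ halfGrid := by
            intro u hu
            by_contra hoffj
            exact hji (hone u (hsub (Set.Ioo_subset_Icc_self hu)) j i hoffj (hoffab u hu))
          have hcj : ContinuousOn (π j) (Set.Icc a b) := (hcont j).mono hsub
          have h1 : (π j s).1 = (π j τ).1 :=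
            constOn_H hcj.fst (fun u hu => (hgridj u hu).1) s hs τ hτIoo
          have h2 : (π j s).2 = (π j τ).2 :=
            constOn_H hcj.snd (fun u hu => (hgridj u hu).2) s hs τ hτIoo
          have hτj : π j τ = C j := by
            rw [hcompat j, lgt_eq hτ0 (hothers j hji)]
          rw [← hτj]
          exact Prod.ext h1 h2
        have hfree_mid : ∀ t ∈ Set.Ioo (0:ℝ) 1,
            FreeMulti W (Function.update C i ((1 - t) • C i + t • π i b)) := by
          intro t ht
          obtain ⟨s, hs, hγs⟩ := hsweep t ht
          have hfun : Function.update C i ((1 - t) • C i + t • π i b) = fun j => π j s := by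
            funext j
            by_cases hj : j = i
            · rw [hj, Function.update_self, hCiab]
              exact hγs.symm
            · rw [Function.update_of_ne hj]
              exact (hconst j hj s hs).symm
          rw [hfun]
          exact hfree s (hsub (Set.Ioo_subset_Icc_self hs))
        have hC'free : FreeMulti W (Function.update C i (π i b)) :=
          free_endpoint hCfree hfree_mid
        have hupdate : C' = Function.update C i (π i b) := by
          funext j
          by_cases hj : j = i
          · rw [hj, Function.update_self]; exact hC'i
          · rw [Function.update_of_ne hj]; exact hC'j j hj
        have hmove : DiscreteMove W C C' := by
          refine ⟨i, ?_, fun j hj => hC'j j hj, hCfree, ?_, ?_⟩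
          · rw [hCiab, hC'i]; exact hadj
          · rw [hupdate]; exact hC'free
          · intro t ht
            rw [hC'i]
            by_cases ht0 : t = 0
            · rw [ht0]
              have hexp : (1 - (0:ℝ)) • C i + (0:ℝ) • π i b = C i := by simp
              rw [hexp, Function.update_eq_self]
              exact hCfree
            · by_cases ht1 : t = 1
              · rw [ht1]
                have hexp : (1 - (1:ℝ)) • C i + (1:ℝ) • π i b = π i b := by simp
                rw [hexp]
                exact hC'free
              · exact hfree_mid t ⟨lt_of_le_of_ne ht.1 (Ne.symm ht0), lt_of_le_of_ne ht.2 ht1⟩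
        -- assemble the extended path
        set Cs' : ℕ → Fin m → ℝ × ℝ := fun k => if k ≤ N then Cs k else C' with hCs'def
        have hCs'le : ∀ k, k ≤ N → Cs' k = Cs k := by
          intro k hk
          simp only [hCs'def]
          rw [if_pos hk]
        have hCs'gt : ∀ k, ¬ k ≤ N → Cs' k = C' := by
          intro k hk
          simp only [hCs'def]
          rw [if_neg hk]
        have hC'gridfree : (∀ j, C' j ∈ halfGrid) ∧ FreeMulti W C' := by
          constructor
          · intro j
            rw [hupdate]
            by_cases hj : j = i
            · rw [hj, Function.update_self]; exact hbg
            · rw [Function.update_of_ne hj]; exact hCgrid j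
          · rw [hupdate]; exact hC'free
        refine ⟨N + 1, Cs', ?_, ?_, ?_, ?_⟩
        · rw [hCs'le 0 (Nat.zero_le N)]
          exact hr
        · intro k hk
          by_cases hkN : k ≤ N
          · rw [hCs'le k hkN]; exact hnodes k hkN
          · rw [hCs'gt k hkN]
            exact hC'gridfree
        · intro k hk
          by_cases hkN : k < N
          · rw [hCs'le k hkN.le, hCs'le (k+1) hkN]
            exact hmoves k hkN
          · have hkeq : k = N := by omega
            rw [hkeq, hCs'le N le_rfl, hCs'gt (N+1) (by omega)]
            exact hmove
        · intro j
          rw [hCs'gt (N+1) (by omega)]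
    · push_neg at hex
      refine ⟨N, Cs, hr, hnodes, hmoves, fun i => ?_⟩
      exact (hClaimA i (hex i)).symm
  -- the supremum argument
  set A : Set ℝ := {τ | τ ∈ Set.Icc (0:ℝ) 1 ∧ P τ} with hAdef
  have hAne : A.Nonempty := ⟨0, ⟨le_rfl, zero_le_one⟩, hP0⟩
  have hAbdd : BddAbove A := ⟨1, fun s hs => hs.1.2⟩
  set σ : ℝ := sSup A with hσdef
  have hσ0 : 0 ≤ σ := le_csSup hAbdd ⟨⟨le_rfl, zero_le_one⟩, hP0⟩
  have hσ1 : σ ≤ 1 := csSup_le hAne (fun s hs => hs.1.2)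
  have hPσ : P σ := by
    refine hclosed σ ⟨hσ0, hσ1⟩ (fun ε hε => ?_)
    obtain ⟨τ, hτA, hτlt⟩ := exists_lt_of_lt_csSup hAne (by linarith : σ - ε < σ)
    exact ⟨τ, hτA.1.1, le_csSup hAbdd hτA, hτlt, hτA.2⟩
  have hσeq : σ = 1 := by
    by_contra hne
    have hlt : σ < 1 := lt_of_le_of_ne hσ1 hne
    obtain ⟨τ', hτ'1, hτ'2, hτ'P⟩ := hopen σ hσ0 hlt hPσ
    have : τ' ≤ σ := le_csSup hAbdd ⟨⟨hσ0.trans hτ'1.le, hτ'2⟩, hτ'P⟩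
    linarith
  rw [hσeq] at hPσ
  obtain ⟨N, Cs, h1, h2, h3, h4⟩ := hPσ
  have hCsN : Cs N = fun i => π i 1 := by
    funext i
    rw [h4 i, lgt_eq zero_le_one (hg1 i)]
  exact ⟨N, Cs, h1, by rw [hCsN]; exact hend, h2, h3⟩
end
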